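/- arXiv:2008.03815 — 9 statements merged into one kernel-verified Lean document; each statement's English description precedes it below -/
import Mathlib

section
/- Let T = (a_{i,j}), i mod τ, j mod σ, be a simple tile of a periodic solution. Then: (1) the entries of each row of T are pairwise distinct, i.e., a_{i,j} = a_{i,m} implies j ≡ m (mod σ); and (2) if a_{i,j} = a_{k,m} for any indices, then a_{i,j+r} = a_{k,m+r} for all r, i.e., rows i and k are circular shifts of each other. -/
open Filter

/-- An `n`-state 2-neighbor cellular automaton rule. -/
abbrev CARule (n : ℕ) := Fin n → Fin n → Fin n

/-- One step of the CA evolution: `ξ_{t+1}(x) = f(ξ_t(x-1), ξ_t(x))`. -/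
def caStep {n : ℕ} (f : CARule n) (ξ : ℤ → Fin n) : ℤ → Fin n :=
  fun x => f (ξ (x - 1)) (ξ x)

/-- The trajectory of an initial configuration under the rule `f`. -/
def caTraj {n : ℕ} (f : CARule n) (ξ : ℤ → Fin n) : ℕ → ℤ → Fin n
  | 0 => ξ
  | t + 1 => caStep f (caTraj f ξ t)

/-- `ξ` is (the initial configuration of) a periodic solution of `f` with
minimal temporal period `τ` and minimal spatial period `σ`. -/
def IsPS {n : ℕ} (f : CARule n) (ξ : ℤ → Fin n) (τ σ : ℕ) : Prop :=
  0 < τ ∧ 0 < σ ∧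
  (∀ x : ℤ, ξ (x + (σ : ℤ)) = ξ x) ∧
  (∀ σ' : ℕ, 0 < σ' → (∀ x : ℤ, ξ (x + (σ' : ℤ)) = ξ x) → σ ≤ σ') ∧
  caTraj f ξ τ = ξ ∧
  (∀ τ' : ℕ, 0 < τ' → caTraj f ξ τ' = ξ → τ ≤ τ')

/-- `η` is a proper initial configuration for the periodic solution `ξ`:
it agrees with `ξ` at all sites `≤ y` for some `y`. -/
def IsProper {n : ℕ} (ξ η : ℤ → Fin n) : Prop :=
  ∃ y : ℤ, ∀ x ≤ y, η x = ξ x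

/-- The periodic solution `ξ` of `f` is weakly robust: the expansion velocity is
positive, i.e. there is `v > 0` such that for every proper initial configuration
`η`, eventually (in `t`) the two trajectories agree at all sites `x ≤ v·t`
(equivalently, `inf_η liminf_t s_t(η)/t > 0`). -/
def IsWeaklyRobust {n : ℕ} (f : CARule n) (ξ : ℤ → Fin n) : Prop :=
  ∃ v : ℝ, 0 < v ∧ ∀ η : ℤ → Fin n, IsProper ξ η →
    ∀ᶠ t : ℕ in atTop, ∀ x : ℤ, (x : ℝ) ≤ v * t → caTraj f η t x = caTraj f ξ t x

/-- The label (τ-periodic sequence) `A` right-extends to `B` under `f`: `A → B`. -/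
def RightExtends {n : ℕ} (f : CARule n) (A B : ℕ → Fin n) : Prop :=
  ∀ i : ℕ, f (A i) (B i) = B (i + 1)

/-- The sequence `c_{j+1} = f(a_j, c_j)` started at `c₀`. -/
def chaseSeq {n : ℕ} (f : CARule n) (A : ℕ → Fin n) (c₀ : Fin n) : ℕ → Fin n
  | 0 => c₀
  | j + 1 => f (A j) (chaseSeq f A c₀ j)

/-- The label `A` decides `B` under `f`: `A ⇒ B`. -/
def Decides {n : ℕ} (f : CARule n) (A B : ℕ → Fin n) : Prop :=
  RightExtends f A B ∧ ∀ c₀ : Fin n, ∃ j : ℕ, chaseSeq f A c₀ j = B j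

/-- `T` is a (τ,σ)-periodic array (row index mod τ, column index mod σ). -/
def IsTilePeriodic {n : ℕ} (τ σ : ℕ) (T : ℕ → ℕ → Fin n) : Prop :=
  (∀ i j, T (i + τ) j = T i j) ∧ (∀ i j, T i (j + σ) = T i j)

/-- The set of states appearing in the tile `T`. -/
def tileStates (n τ σ : ℕ) (T : ℕ → ℕ → Fin n) : Finset (Fin n) :=
  (Finset.range τ ×ˢ Finset.range σ).image fun p => T p.1 p.2

/-- The set of horizontally adjacent pairs appearing in the tile `T`. -/
def tilePairs (n τ σ : ℕ) (T : ℕ → ℕ → Fin n) : Finset (Fin n × Fin n) :=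
  (Finset.range τ ×ˢ Finset.range σ).image fun p => (T p.1 p.2, T p.1 (p.2 + 1))

/-- `T` is a tile of a periodic solution: uniqueness of assignment, each row has
minimal period `σ`, and the cyclic sequence of rows has minimal period `τ`. -/
def IsPSTile (n τ σ : ℕ) (T : ℕ → ℕ → Fin n) : Prop :=
  IsTilePeriodic τ σ T ∧
  (∀ i j k m, T i j = T k m → T i (j + 1) = T k (m + 1) →
      T (i + 1) (j + 1) = T (k + 1) (m + 1)) ∧
  (∀ i : ℕ, ∀ σ' : ℕ, 0 < σ' → (∀ j, T i (j + σ') = T i j) → σ ≤ σ') ∧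
  (∀ τ' : ℕ, 0 < τ' → (∀ i j, T (i + τ') j = T i j) → τ ≤ τ')

/-- `T` is a tile of a periodic solution of the given rule `f`. -/
def IsPSTileOf {n : ℕ} (f : CARule n) (τ σ : ℕ) (T : ℕ → ℕ → Fin n) : Prop :=
  IsTilePeriodic τ σ T ∧
  (∀ i j, f (T i j) (T i (j + 1)) = T (i + 1) (j + 1)) ∧
  (∀ i : ℕ, ∀ σ' : ℕ, 0 < σ' → (∀ j, T i (j + σ') = T i j) → σ ≤ σ') ∧
  (∀ τ' : ℕ, 0 < τ' → (∀ i j, T (i + τ') j = T i j) → τ ≤ τ')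

/-- `T` is simple: the assignment number `p(T)` equals the number of states `s(T)`. -/
def IsSimpleTile (n τ σ : ℕ) (T : ℕ → ℕ → Fin n) : Prop :=
  (tilePairs n τ σ T).card = (tileStates n τ σ T).card

/-- The rank of a tile: the largest `x` such that some `x` columns of `T`
together contain `x * τ` pairwise distinct states. -/
noncomputable def tileRank (n τ σ : ℕ) (T : ℕ → ℕ → Fin n) : ℕ :=
  sSup {x : ℕ | ∃ J : Finset ℕ, J ⊆ Finset.range σ ∧ J.card = x ∧
    ((J ×ˢ Finset.range τ).image fun p => T p.2 p.1).card = x * τ}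

/-- The tile of the periodic solution `ξ` of `f`: `a_{i,j} = ξ_i(j)`. -/
def psTile {n : ℕ} (f : CARule n) (ξ : ℤ → Fin n) : ℕ → ℕ → Fin n :=
  fun i j => caTraj f ξ i (j : ℤ)

/-- in a simple tile of a periodic solution, entries of each row are
pairwise distinct (equal entries in a row have congruent column indices mod σ),
and any two rows sharing a state are circular shifts of each other. -/
theorem simple_tile_rows (n τ σ : ℕ) (hτ : 1 ≤ τ) (hσ : 1 ≤ σ)
    (T : ℕ → ℕ → Fin n) (hT : IsPSTile n τ σ T) (hsimple : IsSimpleTile n τ σ T) :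
    (∀ i j m, T i j = T i m → j % σ = m % σ) ∧
    (∀ i j k m, T i j = T k m → ∀ r : ℕ, T i (j + r) = T k (m + r)) := by
  obtain ⟨⟨hrowper, hcolper⟩, huniq, hminσ, hminτ⟩ := hT
  -- periodicity with multiples
  have hcolk : ∀ i j k, T i (j + σ * k) = T i j := by
    intro i j k
    induction k with
    | zero => simp
    | succ k ih => rw [Nat.mul_succ, ← Nat.add_assoc, hcolper, ih]
  have hrowk : ∀ i j k, T (i + τ * k) j = T i j := by
    intro i j k
    induction k with
    | zero => simp
    | succ k ih => rw [Nat.mul_succ, ← Nat.add_assoc, hrowper, ih]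
  have hred : ∀ i j, T i j = T (i % τ) (j % σ) := by
    intro i j
    conv_lhs => rw [← Nat.mod_add_div i τ, ← Nat.mod_add_div j σ]
    rw [hrowk, hcolk]
  -- membership of pairs
  have hmem : ∀ i j, (T i j, T i (j + 1)) ∈ tilePairs n τ σ T := by
    intro i j
    refine Finset.mem_image.mpr ⟨(i % τ, j % σ), ?_, ?_⟩
    · exact Finset.mem_product.mpr ⟨Finset.mem_range.mpr (Nat.mod_lt _ hτ),
        Finset.mem_range.mpr (Nat.mod_lt _ hσ)⟩
    · have h1 : T (i % τ) (j % σ) = T i j := (hred i j).symm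
      have h2 : T (i % τ) (j % σ + 1) = T i (j + 1) := by
        have hrr : T i (j + 1) = T (i % τ) (j + 1) := by
          conv_lhs => rw [← Nat.mod_add_div i τ]
          rw [hrowk]
        rw [hrr]
        have he : j + 1 = (j % σ + 1) + σ * (j / σ) := by
          rw [Nat.add_right_comm, Nat.mod_add_div]
        rw [he, hcolk]
      rw [h1, h2]
  have hmemS : ∀ i j, T i j ∈ tileStates n τ σ T := by
    intro i j
    refine Finset.mem_image.mpr ⟨(i % τ, j % σ), ?_, (hred i j).symm⟩
    exact Finset.mem_product.mpr ⟨Finset.mem_range.mpr (Nat.mod_lt _ hτ),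
      Finset.mem_range.mpr (Nat.mod_lt _ hσ)⟩
  -- image of pairs under fst is states
  have himg : (tilePairs n τ σ T).image Prod.fst = tileStates n τ σ T := by
    apply Finset.Subset.antisymm
    · intro a ha
      obtain ⟨p, hp, rfl⟩ := Finset.mem_image.mp ha
      obtain ⟨q, hq, rfl⟩ := Finset.mem_image.mp hp
      exact hmemS q.1 q.2
    · intro a ha
      obtain ⟨q, hq, rfl⟩ := Finset.mem_image.mp ha
      exact Finset.mem_image.mpr ⟨(T q.1 q.2, T q.1 (q.2 + 1)), hmem q.1 q.2, rfl⟩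
  have hinj : Set.InjOn Prod.fst (tilePairs n τ σ T : Set (Fin n × Fin n)) := by
    apply Finset.card_image_iff.mp
    rw [himg, ← hsimple]
  -- key: successor function
  have key : ∀ i j k m, T i j = T k m → T i (j + 1) = T k (m + 1) := by
    intro i j k m h
    have := hinj (hmem i j) (hmem k m) (by simpa using h)
    exact congrArg Prod.snd this
  have shift : ∀ i j k m, T i j = T k m → ∀ r : ℕ, T i (j + r) = T k (m + r) := by
    intro i j k m h r
    induction r with
    | zero => simpa using h
    | succ r ih =>
      rw [← Nat.add_assoc, ← Nat.add_assoc]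
      exact key _ _ _ _ ih
  refine ⟨?_, shift⟩
  -- row distinctness
  have main : ∀ i j m, j ≤ m → T i j = T i m → j % σ = m % σ := by
    intro i j m hjm h
    set d := m - j with hd
    rcases Nat.eq_zero_or_pos d with h0 | hdpos
    · have : j = m := by omega
      rw [this]
    · -- d is a period of row i
      have hper : ∀ j', T i (j' + d) = T i j' := by
        intro j'
        -- choose K with j' + K*σ ≥ j
        obtain ⟨K, hK⟩ : ∃ K, j ≤ j' + σ * K := ⟨j, by nlinarith [hσ]⟩
        have hr := shift i j i m h (j' + σ * K - j)
        have e1 : j + (j' + σ * K - j) = j' + σ * K := by omega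
        have e2 : m + (j' + σ * K - j) = j' + d + σ * K := by omega
        rw [e1, e2, hcolk, hcolk] at hr
        exact hr.symm
      -- then d % σ is a period
      have hmodper : ∀ j', T i (j' + d % σ) = T i j' := by
        intro j'
        have := hper j'
        conv at this => lhs; rw [← Nat.mod_add_div d σ, ← Nat.add_assoc, hcolk]
        exact this
      have hdvd : d % σ = 0 := by
        by_contra hne
        have h1 := hminσ i (d % σ) (Nat.pos_of_ne_zero hne) hmodper
        have h2 := Nat.mod_lt d (show 0 < σ by omega)
        exact absurd (lt_of_lt_of_le h2 h1) (lt_irrefl _)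
      obtain ⟨q, hq⟩ := Nat.dvd_of_mod_eq_zero hdvd
      rw [show m = j + σ * q by omega, Nat.add_mul_mod_self_left]
  intro i j m h
  rcases le_total j m with hjm | hmj
  · exact main i j m hjm h
  · exact (main i m j hmj h.symm).symm
end

section
/- Let T = (a_{i,j}), i mod τ, j mod σ, be a simple tile of a periodic solution. Then: (1) the entries of each column of T are pairwise distinct, i.e., a_{i,j} = a_{k,j} implies i ≡ k (mod τ); and (2) if a_{i,j} = a_{k,m} for any indices, then a_{i+r,j} = a_{k+r,m} for all r, i.e., columns j and m are circular shifts of each other. -/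
open Filter

/-- in a simple tile of a periodic solution, entries of each column are
pairwise distinct (equal entries in a column have congruent row indices mod τ),
and any two columns sharing a state are circular shifts of each other. -/
theorem simple_tile_columns (n τ σ : ℕ) (hτ : 1 ≤ τ) (hσ : 1 ≤ σ)
    (T : ℕ → ℕ → Fin n) (hT : IsPSTile n τ σ T) (hsimple : IsSimpleTile n τ σ T) :
    (∀ i j k, T i j = T k j → i % τ = k % τ) ∧
    (∀ i j k m, T i j = T k m → ∀ r : ℕ, T (i + r) j = T (k + r) m) := by
  obtain ⟨⟨hrow, hcol⟩, huniq, hminσ, hminτ⟩ := hT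
  have hrowq : ∀ i j q, T (i + τ * q) j = T i j := by
    intro i j q
    induction q with
    | zero => simp
    | succ q ih => rw [Nat.mul_succ, ← Nat.add_assoc, hrow, ih]
  have hcolq : ∀ i j q, T i (j + σ * q) = T i j := by
    intro i j q
    induction q with
    | zero => simp
    | succ q ih => rw [Nat.mul_succ, ← Nat.add_assoc, hcol, ih]
  have hmem : ∀ i j, (T i j, T i (j + 1)) ∈ tilePairs n τ σ T := by
    intro i j
    refine Finset.mem_image.2 ⟨(i % τ, j % σ), ?_, ?_⟩
    · simp only [Finset.mem_product, Finset.mem_range]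
      exact ⟨Nat.mod_lt _ hτ, Nat.mod_lt _ hσ⟩
    · have e1 : i = i % τ + τ * (i / τ) := (Nat.mod_add_div i τ).symm
      have e2 : j = j % σ + σ * (j / σ) := (Nat.mod_add_div j σ).symm
      have e3 : j + 1 = (j % σ + 1) + σ * (j / σ) := by
        have := Nat.mod_add_div j σ; omega
      have h1 : T (i % τ) (j % σ) = T i j := by
        conv_rhs => rw [e1, e2]
        rw [hrowq, hcolq]
      have h2 : T (i % τ) (j % σ + 1) = T i (j + 1) := by
        conv_rhs => rw [e1, e3]
        rw [hrowq, hcolq]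
      simp [h1, h2]
  have hinj : Set.InjOn Prod.fst (tilePairs n τ σ T : Set (Fin n × Fin n)) := by
    apply Finset.injOn_of_card_image_eq
    have himg : (tilePairs n τ σ T).image Prod.fst = tileStates n τ σ T := by
      unfold tilePairs tileStates
      rw [Finset.image_image]
      rfl
    rw [himg]
    exact hsimple.symm
  have hsucc : ∀ i j k m, T i j = T k m → T i (j + 1) = T k (m + 1) := by
    intro i j k m h
    have hp := hinj (Finset.mem_coe.2 (hmem i j)) (Finset.mem_coe.2 (hmem k m)) h
    exact congrArg Prod.snd hp
  have hshift : ∀ t i j k m, T i j = T k m → T i (j + t) = T k (m + t) := by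
    intro t
    induction t with
    | zero => intro i j k m h; simpa using h
    | succ t ih =>
      intro i j k m h
      have := hsucc i (j + t) k (m + t) (ih i j k m h)
      simpa [Nat.add_assoc] using this
  have hdown : ∀ i j k m, T i j = T k m → T (i + 1) j = T (k + 1) m := by
    intro i j k m h
    have hA : T i (j + (σ - 1)) = T k (m + (σ - 1)) := hshift (σ - 1) i j k m h
    have hB : T i (j + (σ - 1) + 1) = T k (m + (σ - 1) + 1) := by
      have := hshift σ i j k m h
      have e : ∀ a : ℕ, a + (σ - 1) + 1 = a + σ := by omega
      rw [e j, e m]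
      exact this
    have hU := huniq i (j + (σ - 1)) k (m + (σ - 1)) hA hB
    have e : ∀ a : ℕ, a + (σ - 1) + 1 = a + σ := by omega
    rw [e j, e m] at hU
    have cj := hcol (i + 1) j
    have cm := hcol (k + 1) m
    rw [cj, cm] at hU
    exact hU
  have part2 : ∀ i j k m, T i j = T k m → ∀ r : ℕ, T (i + r) j = T (k + r) m := by
    intro i j k m h r
    induction r with
    | zero => simpa using h
    | succ r ih =>
      have := hdown (i + r) j (k + r) m ih
      simpa [Nat.add_assoc] using this
  refine ⟨?_, part2⟩
  have key : ∀ i k j, i ≤ k → T i j = T k j → i % τ = k % τ := by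
    intro i k j hik h
    rcases Nat.eq_or_lt_of_le hik with he | hlt
    · rw [he]
    set d := k - i with hd
    have hdpos : 0 < d := by omega
    have hcross : ∀ r t, T (i + r) (j + t) = T (k + r) (j + t) := by
      intro r t
      exact hshift t (i + r) j (k + r) j (part2 i j k j h r)
    have hdper : ∀ s c, T (s + d) c = T s c := by
      intro s c
      have hii : i ≤ τ * i := Nat.le_mul_of_pos_left i hτ
      have hjj : j ≤ σ * j := Nat.le_mul_of_pos_left j hσ
      set r := s + τ * i - i with hr
      set t := c + σ * j - j with ht
      have er1 : i + r = s + τ * i := by omega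
      have er2 : k + r = s + d + τ * i := by omega
      have et : j + t = c + σ * j := by omega
      have h1 := hcross r t
      rw [er1, er2, et] at h1
      calc T (s + d) c = T (s + d + τ * i) (c + σ * j) := by rw [hrowq, hcolq]
        _ = T (s + τ * i) (c + σ * j) := h1.symm
        _ = T s c := by rw [hrowq, hcolq]
    have hdq : ∀ q s c, T (s + d * q) c = T s c := by
      intro q
      induction q with
      | zero => simp
      | succ q ih =>
        intro s c
        rw [Nat.mul_succ, ← Nat.add_assoc, hdper, ih]
    set g := Nat.gcd d τ with hg
    have hbez : ∃ u v : ℕ, u * d = g + v * τ := by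
      have hab := Nat.gcd_eq_gcd_ab d τ
      set a := Nat.gcdA d τ with ha
      set b := Nat.gcdB d τ with hb
      set N : ℤ := |a| + |b| with hN
      have hNa : (0:ℤ) ≤ N := by positivity
      have hτZ : (1:ℤ) ≤ (τ:ℤ) := by exact_mod_cast hτ
      have hdZ : (1:ℤ) ≤ (d:ℤ) := by exact_mod_cast hdpos
      have hu0 : (0:ℤ) ≤ a + τ * N := by nlinarith [abs_nonneg a, abs_nonneg b, neg_abs_le a]
      have hv0 : (0:ℤ) ≤ (d:ℤ) * N - b := by nlinarith [abs_nonneg a, abs_nonneg b, le_abs_self b]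
      refine ⟨(a + τ * N).toNat, ((d:ℤ) * N - b).toNat, ?_⟩
      have hcast : ((a + τ * N).toNat : ℤ) * d = (g:ℤ) + (((d:ℤ) * N - b).toNat : ℤ) * τ := by
        rw [Int.toNat_of_nonneg hu0, Int.toNat_of_nonneg hv0, hg]
        rw [hab]
        ring
      exact_mod_cast hcast
    obtain ⟨u, v, huv⟩ := hbez
    have hgper : ∀ s c, T (s + g) c = T s c := by
      intro s c
      have e : s + g + τ * v = s + d * u := by
        have : d * u = g + τ * v := by rw [Nat.mul_comm d u, huv, Nat.mul_comm v τ]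
        omega
      calc T (s + g) c = T (s + g + τ * v) c := (hrowq _ _ _).symm
        _ = T (s + d * u) c := by rw [e]
        _ = T s c := hdq u s c
    have hgpos : 0 < g := Nat.gcd_pos_of_pos_right d hτ
    have hτg : τ ≤ g := hminτ g hgpos (fun i j => hgper i j)
    have hgτ : g ∣ τ := Nat.gcd_dvd_right d τ
    have : g = τ := Nat.le_antisymm (Nat.le_of_dvd hτ hgτ) hτg
    have hτd : τ ∣ d := this ▸ Nat.gcd_dvd_left d τ
    obtain ⟨q, hq⟩ := hτd
    have hk : k = i + τ * q := by omega
    rw [hk, Nat.add_mul_mod_self_left]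
  intro i j k h
  rcases Nat.le_total i k with hle | hle
  · exact key i k j hle h
  · exact (key k i j hle h.symm).symm
end

section
/- Let T be a simple tile of a periodic solution with temporal period τ and spatial period σ. Then there exists a positive integer d dividing gcd(τ, σ) such that s(T) = τσ/d and every state appearing in T appears in exactly d of the τ rows of T and in exactly d of the σ columns of T. -/
open Filter

/-!
Simplicity says that the first-coordinate map from horizontal pairs to states is injective:
a state determines its right neighbour. Together with uniqueness of assignment it also determines
its lower-right neighbour, and since the steps `(0,1)` and `(1,1)` generate the torus
`ℤ_τ × ℤ_σ`, a state determines the whole tile seen from any of its cells. Hence two cells carry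
the same state iff their difference lies in the period group `Λ ≤ ℤ_τ × ℤ_σ`, the states are the
cosets of `Λ`, and `s(T) = τσ/|Λ|`. Minimality of the two periods makes both coordinate
projections injective on `Λ`; so `|Λ|` divides `τ` and `σ`, and the rows (columns) meeting a
state form a translate of a subgroup of order `|Λ|`.
-/

open Function

section Periods

variable {G α : Type*} [AddCommGroup G]

def periodSubgroup (f : G → α) : AddSubgroup G where
  carrier := {v | ∀ x, f (x + v) = f x}
  zero_mem' := by simp
  add_mem' {v w} hv hw x := by rw [← add_assoc, hw, hv]
  neg_mem' {v} hv x := by simpa using (hv (x + -v)).symm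

def DeterminesTranslates {M : Type*} [Add M] (f : M → α) : Prop :=
  ∀ p q, f p = f q → ∀ g, f (p + g) = f (q + g)

theorem determinesTranslates_of_closure_eq_top {M : Type*} [AddMonoid M] {f : M → α} {S : Set M}
    (hS : AddSubmonoid.closure S = ⊤)
    (h : ∀ s ∈ S, ∀ p q, f p = f q → f (p + s) = f (q + s)) : DeterminesTranslates f := by
  intro p q hpq g
  induction (hS ▸ AddSubmonoid.mem_top g : g ∈ AddSubmonoid.closure S)
    using AddSubmonoid.closure_induction generalizing p q with
  | mem s hs => exact h s hs p q hpq
  | zero => simpa using hpq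
  | add a b _ _ ha hb => simpa only [add_assoc] using hb _ _ (ha p q hpq)

variable {f : G → α}

theorem DeterminesTranslates.eq_iff_sub_mem (hf : DeterminesTranslates f) {p q : G} :
    f p = f q ↔ q - p ∈ periodSubgroup f := by
  refine ⟨fun h x => ?_, fun h => ?_⟩
  · rw [show x + (q - p) = q + (x - p) by abel, ← hf p q h, add_sub_cancel]
  · simpa using (h p).symm

theorem DeterminesTranslates.natCard_range_mul_natCard_periodSubgroup
    (hf : DeterminesTranslates f) :
    Nat.card (Set.range f) * Nat.card (periodSubgroup f) = Nat.card G := by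
  have e : Set.range f ≃ G ⧸ periodSubgroup f :=
    (Setoid.quotientKerEquivRange f).symm.trans <| Quotient.congrRight fun p q => by
      rw [Setoid.ker_def, QuotientAddGroup.leftRel_apply, neg_add_eq_sub, hf.eq_iff_sub_mem]
  rw [Nat.card_congr e]
  exact (periodSubgroup f).index_mul_card

theorem DeterminesTranslates.natCard_image_fiber {H : Type*} [AddGroup H]
    (hf : DeterminesTranslates f) (π : G →+ H)
    (hπ : Injective (π.comp (periodSubgroup f).subtype)) (q : G) :
    Nat.card (π '' {p | f p = f q}) = Nat.card (periodSubgroup f) := by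
  have hrange : π '' {p | f p = f q} = Set.range fun v : periodSubgroup f => π (q + v) := by
    ext y
    constructor
    · rintro ⟨p, hp, rfl⟩
      exact ⟨⟨p - q, hf.eq_iff_sub_mem.mp hp.symm⟩, by simp⟩
    · rintro ⟨v, rfl⟩
      exact ⟨q + v, (hf.eq_iff_sub_mem.mpr (by simp)).symm, rfl⟩
  rw [hrange, Nat.card_range_of_injective]
  intro v w h
  exact hπ (by simpa using h)

end Periods

theorem ZMod.closure_one_one_zero_one_eq_top (τ σ : ℕ) [NeZero τ] [NeZero σ] :
    AddSubmonoid.closure {((1 : ZMod τ), (1 : ZMod σ)), (0, 1)} = ⊤ := by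
  refine eq_top_iff.mpr fun g _ => ?_
  have hg : g = g.1.val • ((1 : ZMod τ), (1 : ZMod σ)) + (g.2 - g.1.val).val • (0, 1) := by
    ext <;> simp
  rw [hg]
  exact add_mem (nsmul_mem (AddSubmonoid.subset_closure (by simp)) _)
    (nsmul_mem (AddSubmonoid.subset_closure (by simp)) _)

theorem ZMod.exists_lt_iff {m : ℕ} [NeZero m] (P : ZMod m → Prop) :
    (∃ j < m, P j) ↔ ∃ x, P x :=
  ⟨fun ⟨j, _, h⟩ => ⟨j, h⟩,
    fun ⟨x, h⟩ => ⟨x.val, x.val_lt, by rwa [natCast_zmod_val]⟩⟩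

theorem ZMod.natCard_subtype_lt_and {m : ℕ} [NeZero m] (P : ZMod m → Prop) :
    Nat.card {i : ℕ // i < m ∧ P i} = Nat.card {x // P x} :=
  Nat.card_congr
    { toFun i := ⟨i.1, i.2.2⟩
      invFun x := ⟨x.1.val, x.1.val_lt, by rw [natCast_zmod_val]; exact x.2⟩
      left_inv i := Subtype.ext (val_cast_of_lt i.2.1)
      right_inv x := Subtype.ext (natCast_zmod_val x.1) }

def tileOnTorus {α : Type*} (τ σ : ℕ) (T : ℕ → ℕ → α) : ZMod τ × ZMod σ → α :=
  fun p => T p.1.val p.2.val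

section Tile

variable {n τ σ : ℕ} {T : ℕ → ℕ → Fin n}

theorem IsTilePeriodic.apply_eq (h : IsTilePeriodic τ σ T) (i j : ℕ) :
    T i j = tileOnTorus τ σ T (i, j) := by
  have hcol : Periodic (T · j) τ := fun i => h.1 i j
  have hrow : Periodic (T (i % τ)) σ := h.2 _
  simp only [tileOnTorus, ZMod.val_natCast]
  rw [hrow.map_mod_nat j]
  exact (hcol.map_mod_nat i).symm

theorem IsPSTile.injective_fst_on_periods [NeZero σ] (hT : IsPSTile n τ σ T) :
    Injective ((AddMonoidHom.fst (ZMod τ) (ZMod σ)).comp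
      (periodSubgroup (tileOnTorus τ σ T)).subtype) := by
  refine (injective_iff_map_eq_zero _).mpr fun ⟨⟨x, y⟩, hv⟩ hx => ?_
  obtain rfl : x = 0 := hx
  suffices y = 0 by simp [this]
  by_contra hy
  have hle := hT.2.2.1 0 y.val (ZMod.val_pos.mpr hy) fun j => by
    rw [hT.1.apply_eq, hT.1.apply_eq]
    simpa using hv ((0 : ℕ), j)
  exact absurd y.val_lt (not_lt.mpr hle)

theorem IsPSTile.injective_snd_on_periods [NeZero τ] (hT : IsPSTile n τ σ T) :
    Injective ((AddMonoidHom.snd (ZMod τ) (ZMod σ)).comp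
      (periodSubgroup (tileOnTorus τ σ T)).subtype) := by
  refine (injective_iff_map_eq_zero _).mpr fun ⟨⟨x, y⟩, hv⟩ hy => ?_
  obtain rfl : y = 0 := hy
  suffices x = 0 by simp [this]
  by_contra hx
  have hle := hT.2.2.2 x.val (ZMod.val_pos.mpr hx) fun i j => by
    rw [hT.1.apply_eq, hT.1.apply_eq]
    simpa using hv (i, j)
  exact absurd x.val_lt (not_lt.mpr hle)

variable [NeZero τ] [NeZero σ]

theorem image_range_prod_range_eq_image_univ {β : Type*} [DecidableEq β]
    (F : ℕ → ℕ → β) :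
    (Finset.range τ ×ˢ Finset.range σ).image (fun p => F p.1 p.2) =
      Finset.univ.image (tileOnTorus τ σ F) := by
  ext b
  simp only [Finset.mem_image, Finset.mem_product, Finset.mem_range, Finset.mem_univ, true_and,
    Prod.exists, tileOnTorus]
  constructor
  · rintro ⟨i, j, ⟨hi, hj⟩, rfl⟩
    exact ⟨i, j, by rw [ZMod.val_cast_of_lt hi, ZMod.val_cast_of_lt hj]⟩
  · rintro ⟨x, y, rfl⟩
    exact ⟨x.val, y.val, ⟨x.val_lt, y.val_lt⟩, rfl⟩

theorem tileStates_eq_image_univ :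
    tileStates n τ σ T = Finset.univ.image (tileOnTorus τ σ T) :=
  image_range_prod_range_eq_image_univ T

theorem card_tileStates :
    (tileStates n τ σ T).card = Nat.card (Set.range (tileOnTorus τ σ T)) := by
  rw [tileStates_eq_image_univ, ← Set.ncard_coe_finset, Finset.coe_image, Finset.coe_univ,
    Set.image_univ, Nat.card_coe_set_eq]

theorem IsTilePeriodic.apply_val_add (h : IsTilePeriodic τ σ T)
    (p : ZMod τ × ZMod σ) (a b : ℕ) :
    T (p.1.val + a) (p.2.val + b) = tileOnTorus τ σ T (p + ((a : ZMod τ), (b : ZMod σ))) := by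
  rw [h.apply_eq]
  congr 1
  ext <;> simp

theorem IsTilePeriodic.apply_val_val_add_one (h : IsTilePeriodic τ σ T)
    (p : ZMod τ × ZMod σ) : T p.1.val (p.2.val + 1) = tileOnTorus τ σ T (p + (0, 1)) := by
  simpa using h.apply_val_add p 0 1

theorem IsTilePeriodic.tilePairs_eq_image_univ (h : IsTilePeriodic τ σ T) :
    tilePairs n τ σ T = Finset.univ.image fun p =>
      (tileOnTorus τ σ T p, tileOnTorus τ σ T (p + (0, 1))) := by
  rw [tilePairs, image_range_prod_range_eq_image_univ (fun i j => (T i j, T i (j + 1)))]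
  refine congrArg (Finset.image · _) (funext fun p => ?_)
  exact Prod.ext rfl (h.apply_val_val_add_one p)

theorem IsSimpleTile.right_determined (hs : IsSimpleTile n τ σ T)
    (h : IsTilePeriodic τ σ T) {p q : ZMod τ × ZMod σ}
    (hpq : tileOnTorus τ σ T p = tileOnTorus τ σ T q) :
    tileOnTorus τ σ T (p + (0, 1)) = tileOnTorus τ σ T (q + (0, 1)) := by
  classical
  have hinj : Set.InjOn Prod.fst (tilePairs n τ σ T : Set (Fin n × Fin n)) := by
    rw [← Finset.card_image_iff, hs, tileStates_eq_image_univ, h.tilePairs_eq_image_univ,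
      Finset.image_image]
    rfl
  have hmem (r : ZMod τ × ZMod σ) :
      (tileOnTorus τ σ T r, tileOnTorus τ σ T (r + (0, 1))) ∈ tilePairs n τ σ T :=
    h.tilePairs_eq_image_univ ▸ Finset.mem_image_of_mem _ (Finset.mem_univ r)
  exact congrArg Prod.snd (hinj (hmem p) (hmem q) hpq)

theorem IsPSTile.diag_determined (hT : IsPSTile n τ σ T)
    {p q : ZMod τ × ZMod σ} (hpq : tileOnTorus τ σ T p = tileOnTorus τ σ T q)
    (hpq' : tileOnTorus τ σ T (p + (0, 1)) = tileOnTorus τ σ T (q + (0, 1))) :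
    tileOnTorus τ σ T (p + (1, 1)) = tileOnTorus τ σ T (q + (1, 1)) := by
  have diag : ∀ r, T (r.1.val + 1) (r.2.val + 1) = tileOnTorus τ σ T (r + (1, 1)) := fun r => by
    simpa using hT.1.apply_val_add r 1 1
  rw [← diag, ← diag]
  exact hT.2.1 _ _ _ _ hpq (by rwa [hT.1.apply_val_val_add_one, hT.1.apply_val_val_add_one])

theorem IsPSTile.determinesTranslates (hT : IsPSTile n τ σ T)
    (hs : IsSimpleTile n τ σ T) : DeterminesTranslates (tileOnTorus τ σ T) := by
  refine determinesTranslates_of_closure_eq_top (ZMod.closure_one_one_zero_one_eq_top τ σ) ?_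
  rintro s (rfl | rfl) p q hpq
  · exact hT.diag_determined hpq (hs.right_determined hT.1 hpq)
  · exact hs.right_determined hT.1 hpq

theorem IsTilePeriodic.natCard_rows (h : IsTilePeriodic τ σ T) (a : Fin n) :
    Nat.card {i : ℕ // i < τ ∧ ∃ j < σ, T i j = a} =
      Nat.card (Prod.fst '' {p | tileOnTorus τ σ T p = a}) := by
  refine (Nat.card_congr (Equiv.subtypeEquivRight fun i => and_congr_right fun _ => ?_)).trans
    (ZMod.natCard_subtype_lt_and (· ∈ Prod.fst '' {p | tileOnTorus τ σ T p = a}))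
  simp only [Set.mem_image, Set.mem_ofPred_eq, Prod.exists, exists_and_right, exists_eq_right,
    h.apply_eq]
  exact ZMod.exists_lt_iff (fun y => tileOnTorus τ σ T (i, y) = a)

theorem IsTilePeriodic.natCard_cols (h : IsTilePeriodic τ σ T) (a : Fin n) :
    Nat.card {j : ℕ // j < σ ∧ ∃ i < τ, T i j = a} =
      Nat.card (Prod.snd '' {p | tileOnTorus τ σ T p = a}) := by
  refine (Nat.card_congr (Equiv.subtypeEquivRight fun j => and_congr_right fun _ => ?_)).trans
    (ZMod.natCard_subtype_lt_and (· ∈ Prod.snd '' {p | tileOnTorus τ σ T p = a}))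
  simp only [Set.mem_image, Set.mem_ofPred_eq, Prod.exists, exists_eq_right, h.apply_eq]
  exact ZMod.exists_lt_iff (fun x => tileOnTorus τ σ T (x, j) = a)

end Tile

/-- for a simple tile of a periodic solution there is a positive
divisor `d` of `gcd(τ, σ)` such that `s(T) = τσ/d` and every state of `T`
appears in exactly `d` of the `τ` rows and exactly `d` of the `σ` columns. -/
theorem simple_tile_state_count (n τ σ : ℕ) (hτ : 1 ≤ τ) (hσ : 1 ≤ σ)
    (T : ℕ → ℕ → Fin n) (hT : IsPSTile n τ σ T) (hsimple : IsSimpleTile n τ σ T) :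
    ∃ d : ℕ, 0 < d ∧ d ∣ Nat.gcd τ σ ∧
      (tileStates n τ σ T).card = τ * σ / d ∧
      ∀ a ∈ tileStates n τ σ T,
        Nat.card {i : ℕ // i < τ ∧ ∃ j < σ, T i j = a} = d ∧
        Nat.card {j : ℕ // j < σ ∧ ∃ i < τ, T i j = a} = d := by
  have : NeZero τ := ⟨by omega⟩
  have : NeZero σ := ⟨by omega⟩
  have hdet := hT.determinesTranslates hsimple
  set Λ := periodSubgroup (tileOnTorus τ σ T)
  refine ⟨Nat.card Λ, Nat.card_pos, Nat.dvd_gcd ?_ ?_, ?_, ?_⟩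
  · simpa using AddSubgroup.card_dvd_of_injective _ hT.injective_fst_on_periods
  · simpa using AddSubgroup.card_dvd_of_injective _ hT.injective_snd_on_periods
  · have hcount := hdet.natCard_range_mul_natCard_periodSubgroup
    rw [Nat.card_prod, Nat.card_zmod, Nat.card_zmod] at hcount
    rw [card_tileStates, ← hcount, Nat.mul_div_cancel _ Nat.card_pos]
  · intro a ha
    rw [tileStates_eq_image_univ] at ha
    obtain ⟨q, -, rfl⟩ := Finset.mem_image.mp ha
    exact ⟨(hT.1.natCard_rows _).trans (hdet.natCard_image_fiber _ hT.injective_fst_on_periods _),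
      (hT.1.natCard_cols _).trans (hdet.natCard_image_fiber _ hT.injective_snd_on_periods _)⟩
end

section
/- Fix τ, σ ≥ 1 and n. An integer s with 1 ≤ s ≤ n is the number of distinct states s(T) of some simple tile T of a periodic solution with temporal period τ and spatial period σ over the alphabet ℤ_n if and only if there exists a divisor d of gcd(τ, σ) such that s = τσ/d. -/
open Filter

/-!
In a simple tile the right neighbour of a cell is a function of its state, and uniqueness
of assignment makes the lower-right neighbour one as well. So equality of states is invariant
under the translations `(0, 1)` and `(1, 1)`, which generate `ℤ_τ × ℤ_σ`: two cells carry the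
same state iff they differ by a period of the tile. The states are therefore the cosets of the
period group `H ≤ ℤ_τ × ℤ_σ`, and `s(T) = τσ / |H|`. Minimality of the two periods says that
`H` meets both coordinate axes trivially, so both projections are injective on `H` and `|H|`
divides `τ` and `σ`. Conversely, for `d ∣ gcd(τ, σ)` the cyclic group generated by
`(τ/d, σ/d)` has order `d` and meets both axes trivially, and labelling each cell by its coset
gives a simple tile with `τσ/d` states.
-/

lemma Finset.card_image_pair_eq_iff {ι β γ : Type*} [DecidableEq β] [DecidableEq γ]
    {s : Finset ι} {f : ι → β} {g : ι → γ} :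
    (s.image fun x => (f x, g x)).card = (s.image f).card ↔
      ∀ x ∈ s, ∀ y ∈ s, f x = f y → g x = g y := by
  have hfst : (s.image fun x => (f x, g x)).image Prod.fst = s.image f := by
    rw [Finset.image_image]
    rfl
  rw [← hfst, eq_comm, Finset.card_image_iff]
  constructor
  · intro h x hx y hy hxy
    exact congrArg Prod.snd (h (Finset.mem_image_of_mem _ hx) (Finset.mem_image_of_mem _ hy) hxy)
  · intro h a ha b hb hab
    obtain ⟨x, hx, rfl⟩ := Finset.mem_image.1 ha
    obtain ⟨y, hy, rfl⟩ := Finset.mem_image.1 hb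
    exact Prod.ext hab (h x hx y hy hab)

section Periods

variable {G α : Type*} [AddCommGroup G]

def periods (F : G → α) : AddSubgroup G where
  carrier := {c | Function.Periodic F c}
  zero_mem' := fun x => by rw [add_zero]
  add_mem' := fun ha hb => ha.add_period hb
  neg_mem' := fun h => h.neg

def fibreTranslations (F : G → α) : AddSubmonoid G where
  carrier := {e | ∀ p q, F p = F q → F (p + e) = F (q + e)}
  zero_mem' := fun p q h => by simpa using h
  add_mem' := fun ha hb p q h => by
    rw [← add_assoc, ← add_assoc]
    exact hb _ _ (ha _ _ h)

lemma eq_iff_neg_add_mem_periods {F : G → α} (hF : fibreTranslations F = ⊤) (p q : G) :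
    F p = F q ↔ -p + q ∈ periods F := by
  refine ⟨fun h r => ?_, fun h => ?_⟩
  · have hr : r - p ∈ fibreTranslations F := hF ▸ AddSubmonoid.mem_top _
    rw [show r + (-p + q) = q + (r - p) by abel, ← hr p q h, add_sub_cancel]
  · simpa using (h p).symm

lemma mem_fibreTranslations_of_cosets {H : AddSubgroup G} {F : G → α}
    (hF : ∀ p q, F p = F q ↔ -p + q ∈ H) (e : G) : e ∈ fibreTranslations F := by
  intro p q h
  rw [hF] at h ⊢
  rwa [show -(p + e) + (q + e) = -p + q by abel]

lemma card_image_eq_card_quotient [Fintype G] [DecidableEq α] {H : AddSubgroup G} {F : G → α}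
    (hF : ∀ p q, F p = F q ↔ -p + q ∈ H) :
    (Finset.univ.image F).card = Nat.card (G ⧸ H) := by
  classical
  let φ : G ⧸ H → α :=
    Quotient.lift F fun p q hpq => (hF p q).2 (QuotientAddGroup.leftRel_apply.mp hpq)
  have hφ : Function.Injective φ := by
    rintro ⟨p⟩ ⟨q⟩ h
    exact Quotient.sound (QuotientAddGroup.leftRel_apply.mpr ((hF p q).1 h))
  have : Finset.univ.image F = Finset.univ.image φ := by
    rw [← Finset.image_univ_of_surjective (QuotientAddGroup.mk_surjective (s := H)),
      Finset.image_image]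
    rfl
  rw [this, Finset.card_image_of_injective _ hφ, Finset.card_univ, Nat.card_eq_fintype_card]

end Periods

section Axes

variable {A B : Type*} [AddGroup A] [AddGroup B]

def MeetsAxesTrivially (H : AddSubgroup (A × B)) : Prop :=
  (∀ a, (a, (0 : B)) ∈ H → a = 0) ∧ ∀ b, ((0 : A), b) ∈ H → b = 0

lemma MeetsAxesTrivially.card_dvd_gcd [Finite A] [Finite B] {H : AddSubgroup (A × B)}
    (hH : MeetsAxesTrivially H) : Nat.card H ∣ Nat.gcd (Nat.card A) (Nat.card B) := by
  refine Nat.dvd_gcd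
    (AddSubgroup.card_dvd_of_injective ((AddMonoidHom.fst A B).comp H.subtype) ?_)
    (AddSubgroup.card_dvd_of_injective ((AddMonoidHom.snd A B).comp H.subtype) ?_)
  · refine (injective_iff_map_eq_zero _).2 fun ⟨⟨a, b⟩, hab⟩ h => ?_
    obtain rfl : a = 0 := h
    obtain rfl := hH.2 b hab
    rfl
  · refine (injective_iff_map_eq_zero _).2 fun ⟨⟨a, b⟩, hab⟩ h => ?_
    obtain rfl : b = 0 := h
    obtain rfl := hH.1 a hab
    rfl

lemma zsmul_fst_eq_zero_iff {x : A × B} (h : addOrderOf x.1 = addOrderOf x.2) (k : ℤ) :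
    k • x.1 = 0 ↔ k • x.2 = 0 := by
  rw [← addOrderOf_dvd_iff_zsmul_eq_zero, ← addOrderOf_dvd_iff_zsmul_eq_zero, h]

lemma meetsAxesTrivially_zmultiples {x : A × B} (h : addOrderOf x.1 = addOrderOf x.2) :
    MeetsAxesTrivially (AddSubgroup.zmultiples x) := by
  refine ⟨fun a ha => ?_, fun b hb => ?_⟩
  · obtain ⟨k, hk⟩ := AddSubgroup.mem_zmultiples_iff.1 ha
    obtain ⟨rfl, hk₂⟩ := Prod.ext_iff.1 hk
    exact (zsmul_fst_eq_zero_iff h k).2 hk₂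
  · obtain ⟨k, hk⟩ := AddSubgroup.mem_zmultiples_iff.1 hb
    obtain ⟨hk₁, rfl⟩ := Prod.ext_iff.1 hk
    exact (zsmul_fst_eq_zero_iff h k).1 hk₁

end Axes

lemma ZMod.addOrderOf_natCast_div {a d : ℕ} (ha : a ≠ 0) (hd : d ∣ a) :
    addOrderOf ((a / d : ℕ) : ZMod a) = d := by
  rw [ZMod.addOrderOf_coe _ ha, Nat.gcd_eq_right (Nat.div_dvd_of_dvd hd), Nat.div_div_self hd ha]

section Tiles

variable {τ σ : ℕ}

lemma fibreTranslations_eq_top [NeZero τ] [NeZero σ] {α : Type*} {F : ZMod τ × ZMod σ → α}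
    (h₀₁ : (0, 1) ∈ fibreTranslations F) (h₁₁ : (1, 1) ∈ fibreTranslations F) :
    fibreTranslations F = ⊤ := by
  refine eq_top_iff.2 fun e _ => ?_
  have he : e = e.1.val • (1, 1) + (e.2 - e.1.val).val • (0, 1) := by
    ext <;> simp
  rw [he]
  exact add_mem (AddSubmonoid.nsmul_mem _ h₁₁ _) (AddSubmonoid.nsmul_mem _ h₀₁ _)

lemma exists_meetsAxesTrivially_card_eq [NeZero τ] [NeZero σ] {d : ℕ}
    (hd : d ∣ Nat.gcd τ σ) :
    ∃ H : AddSubgroup (ZMod τ × ZMod σ), MeetsAxesTrivially H ∧ Nat.card H = d := by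
  have hτ := ZMod.addOrderOf_natCast_div (NeZero.ne τ) (hd.trans (Nat.gcd_dvd_left τ σ))
  have hσ := ZMod.addOrderOf_natCast_div (NeZero.ne σ) (hd.trans (Nat.gcd_dvd_right τ σ))
  refine ⟨AddSubgroup.zmultiples (((τ / d : ℕ) : ZMod τ), ((σ / d : ℕ) : ZMod σ)),
    meetsAxesTrivially_zmultiples (hτ.trans hσ.symm), ?_⟩
  rw [Nat.card_zmultiples, Prod.addOrderOf_mk, hτ, hσ, Nat.lcm_self]

lemma card_quotient_eq [NeZero τ] [NeZero σ] (H : AddSubgroup (ZMod τ × ZMod σ)) :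
    Nat.card ((ZMod τ × ZMod σ) ⧸ H) = τ * σ / Nat.card H := by
  refine (Nat.div_eq_of_eq_mul_left Nat.card_pos ?_).symm
  rw [← AddSubgroup.card_eq_card_quotient_mul_card_addSubgroup, Nat.card_prod, Nat.card_zmod,
    Nat.card_zmod]

def tileOf {α : Type*} (F : ZMod τ × ZMod σ → α) : ℕ → ℕ → α := fun i j => F (i, j)

lemma isTilePeriodic_iff_exists_tileOf {n : ℕ} {T : ℕ → ℕ → Fin n} :
    IsTilePeriodic τ σ T ↔ ∃ F : ZMod τ × ZMod σ → Fin n, T = tileOf F := by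
  constructor
  · rintro ⟨hcol, hrow⟩
    refine ⟨fun p => T p.1.val p.2.val, funext₂ fun i j => ?_⟩
    simp only [tileOf, ZMod.val_natCast]
    rw [Function.Periodic.map_mod_nat (f := (T · _)) (fun i => hcol i _),
      Function.Periodic.map_mod_nat (f := T i) (hrow i)]
  · rintro ⟨F, rfl⟩
    exact ⟨fun i j => by simp [tileOf], fun i j => by simp [tileOf]⟩

variable {n : ℕ} {F : ZMod τ × ZMod σ → Fin n}

lemma isPSTile_tileOf {H : AddSubgroup (ZMod τ × ZMod σ)}
    (hF : ∀ p q, F p = F q ↔ -p + q ∈ H) (hH : MeetsAxesTrivially H) :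
    IsPSTile n τ σ (tileOf F) := by
  refine ⟨isTilePeriodic_iff_exists_tileOf.2 ⟨F, rfl⟩, fun i j k m h _ => ?_,
    fun i σ' hσ' hrow => ?_, fun τ' hτ' hcol => ?_⟩
  · simpa [tileOf] using mem_fibreTranslations_of_cosets hF (1, 1) _ _ h
  · have : ((0 : ZMod τ), (σ' : ZMod σ)) ∈ H := by
      simpa [tileOf] using (hF _ _).1 (hrow 0).symm
    exact Nat.le_of_dvd hσ' ((ZMod.natCast_eq_zero_iff _ _).1 (hH.2 _ this))
  · have : ((τ' : ZMod τ), (0 : ZMod σ)) ∈ H := by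
      simpa [tileOf] using (hF _ _).1 (hcol 0 0).symm
    exact Nat.le_of_dvd hτ' ((ZMod.natCast_eq_zero_iff _ _).1 (hH.1 _ this))

variable [NeZero τ] [NeZero σ]

lemma image_range_prod_range {β : Type*} [DecidableEq β] (Φ : ZMod τ × ZMod σ → β) :
    (Finset.range τ ×ˢ Finset.range σ).image (fun p : ℕ × ℕ => Φ (p.1, p.2)) =
      Finset.univ.image Φ := by
  ext b
  simp only [Finset.mem_image, Finset.mem_product, Finset.mem_range, Finset.mem_univ, true_and]
  constructor
  · rintro ⟨p, -, rfl⟩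
    exact ⟨_, rfl⟩
  · rintro ⟨g, rfl⟩
    exact ⟨(g.1.val, g.2.val), ⟨g.1.val_lt, g.2.val_lt⟩, by simp⟩

lemma tileStates_tileOf : tileStates n τ σ (tileOf F) = Finset.univ.image F :=
  image_range_prod_range F

lemma tilePairs_tileOf :
    tilePairs n τ σ (tileOf F) = Finset.univ.image fun g => (F g, F (g + (0, 1))) := by
  rw [← image_range_prod_range]
  simp [tilePairs, tileOf]

lemma isSimpleTile_tileOf_iff :
    IsSimpleTile n τ σ (tileOf F) ↔ ((0, 1) : ZMod τ × ZMod σ) ∈ fibreTranslations F := by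
  rw [IsSimpleTile, tilePairs_tileOf, tileStates_tileOf, Finset.card_image_pair_eq_iff]
  simp [fibreTranslations]

lemma tileOf_add_val_of_mem_periods {p : ZMod τ × ZMod σ} (hp : p ∈ periods F) (i j : ℕ) :
    tileOf F (i + p.1.val) (j + p.2.val) = tileOf F i j := by
  simp only [tileOf, Nat.cast_add, ZMod.natCast_zmod_val]
  exact hp (i, j)

lemma IsPSTile.exists_tileOf {T : ℕ → ℕ → Fin n} (hT : IsPSTile n τ σ T)
    (hs : IsSimpleTile n τ σ T) :
    ∃ F : ZMod τ × ZMod σ → Fin n, T = tileOf F ∧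
      (∀ p q, F p = F q ↔ -p + q ∈ periods F) ∧ MeetsAxesTrivially (periods F) := by
  obtain ⟨hper, huniq, hrow, hcol⟩ := hT
  obtain ⟨F, rfl⟩ := isTilePeriodic_iff_exists_tileOf.1 hper
  have h₀₁ := isSimpleTile_tileOf_iff.1 hs
  have h₁₁ : ((1, 1) : ZMod τ × ZMod σ) ∈ fibreTranslations F :=
    fun ⟨a, b⟩ ⟨c, e⟩ h => by
    simpa [tileOf] using huniq a.val b.val c.val e.val (by simpa [tileOf] using h)
      (by simpa [tileOf] using h₀₁ _ _ h)
  refine ⟨F, rfl, eq_iff_neg_add_mem_periods (fibreTranslations_eq_top h₀₁ h₁₁), ?_, ?_⟩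
  · intro a ha
    by_contra ha₀
    refine (hcol a.val (ZMod.val_pos.2 ha₀) fun i j => ?_).not_gt a.val_lt
    simpa using tileOf_add_val_of_mem_periods ha i j
  · intro b hb
    by_contra hb₀
    refine (hrow 0 b.val (ZMod.val_pos.2 hb₀) fun j => ?_).not_gt b.val_lt
    simpa using tileOf_add_val_of_mem_periods hb 0 j

lemma card_tileStates_tileOf {H : AddSubgroup (ZMod τ × ZMod σ)}
    (hF : ∀ p q, F p = F q ↔ -p + q ∈ H) :
    (tileStates n τ σ (tileOf F)).card = Nat.card ((ZMod τ × ZMod σ) ⧸ H) := by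
  rw [tileStates_tileOf, card_image_eq_card_quotient hF]

end Tiles

theorem simple_tile_state_count_characterization_general (n τ σ s : ℕ)
    (hτ : 1 ≤ τ) (hσ : 1 ≤ σ) (hsn : s ≤ n) :
    (∃ T : ℕ → ℕ → Fin n, IsPSTile n τ σ T ∧ IsSimpleTile n τ σ T ∧
        (tileStates n τ σ T).card = s) ↔
      ∃ d : ℕ, d ∣ Nat.gcd τ σ ∧ s = τ * σ / d := by
  have : NeZero τ := ⟨by omega⟩
  have : NeZero σ := ⟨by omega⟩
  constructor
  · rintro ⟨T, hT, hs, rfl⟩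
    obtain ⟨F, rfl, hF, hH⟩ := hT.exists_tileOf hs
    refine ⟨Nat.card (periods F), by simpa using hH.card_dvd_gcd, ?_⟩
    rw [card_tileStates_tileOf hF, card_quotient_eq]
  · rintro ⟨d, hd, rfl⟩
    obtain ⟨H, hH, hcard⟩ := exists_meetsAxesTrivially_card_eq hd
    have hQ : Nat.card ((ZMod τ × ZMod σ) ⧸ H) = τ * σ / d := by rw [card_quotient_eq, hcard]
    let φ : (ZMod τ × ZMod σ) ⧸ H ↪ Fin n :=
      (Finite.equivFin _).toEmbedding.trans (Fin.castLEEmb (hQ.trans_le hsn))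
    let F : ZMod τ × ZMod σ → Fin n := φ ∘ QuotientAddGroup.mk
    have hF : ∀ p q, F p = F q ↔ -p + q ∈ H := fun p q =>
      φ.injective.eq_iff.trans QuotientAddGroup.eq
    exact ⟨tileOf F, isPSTile_tileOf hF hH,
      isSimpleTile_tileOf_iff.2 (mem_fibreTranslations_of_cosets hF _),
      (card_tileStates_tileOf hF).trans hQ⟩

/-- an integer `1 ≤ s ≤ n` is the number of distinct states of some
simple tile of a periodic solution with periods `τ, σ` over `ℤ_n` if and only if
`s = τσ/d` for some divisor `d` of `gcd(τ, σ)`. -/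
theorem simple_tile_state_count_characterization (n τ σ s : ℕ)
    (hτ : 1 ≤ τ) (hσ : 1 ≤ σ) (hs1 : 1 ≤ s) (hsn : s ≤ n) :
    (∃ T : ℕ → ℕ → Fin n, IsPSTile n τ σ T ∧ IsSimpleTile n τ σ T ∧
        (tileStates n τ σ T).card = s) ↔
      ∃ d : ℕ, d ∣ Nat.gcd τ σ ∧ s = τ * σ / d :=
  simple_tile_state_count_characterization_general n τ σ s hτ hσ hsn
end

section
/- Let f be an n-state 2-neighbor cellular automaton rule and let T_1 = (a_{i,j}) and T_2 = (b_{k,m}) be two simple tiles of periodic solutions of f that are not identified (neither is a cyclic row/column shift of the other). If T_1 and T_2 have at least one state in common, then there exist indices i, j, k, m such that a_{i,j} = b_{k,m} and a_{i,j+1} ≠ b_{k,m+1}. -/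
open Filter

private lemma mul_pred_add {a b : ℕ} (hb : 1 ≤ b) : a * (b - 1) + a = a * b := by
  cases b with
  | zero => omega
  | succ m => simp [Nat.mul_succ]

/-- if two non-identified simple tiles of periodic solutions of the
same rule `f` share a state, then some occurrences of a common state have
different right neighbors in the two tiles. -/
theorem simple_tiles_extra_assignment {n : ℕ} (f : CARule n)
    (τ₁ σ₁ τ₂ σ₂ : ℕ) (hτ₁ : 1 ≤ τ₁) (hσ₁ : 1 ≤ σ₁) (hτ₂ : 1 ≤ τ₂) (hσ₂ : 1 ≤ σ₂)
    (T₁ T₂ : ℕ → ℕ → Fin n)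
    (h1 : IsPSTileOf f τ₁ σ₁ T₁) (h2 : IsPSTileOf f τ₂ σ₂ T₂)
    (hs1 : IsSimpleTile n τ₁ σ₁ T₁) (hs2 : IsSimpleTile n τ₂ σ₂ T₂)
    (hni : ¬ ∃ r c : ℕ, ∀ i j, T₂ i j = T₁ (i + r) (j + c))
    (hcommon : ∃ i j k m, T₁ i j = T₂ k m) :
    ∃ i j k m, T₁ i j = T₂ k m ∧ T₁ i (j + 1) ≠ T₂ k (m + 1) := by
  by_contra hcon
  push_neg at hcon
  obtain ⟨i₀, j₀, k₀, m₀, heq⟩ := hcommon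
  obtain ⟨⟨hTper1, hSper1⟩, hrule1, -, -⟩ := h1
  obtain ⟨⟨hTper2, hSper2⟩, hrule2, -, -⟩ := h2
  -- propagation of equality to the right
  have prop : ∀ i j k m, T₁ i j = T₂ k m → ∀ t, T₁ i (j + t) = T₂ k (m + t) := by
    intro i j k m h t
    induction t with
    | zero => simpa using h
    | succ t ih =>
      have := hcon i (j + t) k (m + t) ih
      simpa [Nat.add_assoc] using this
  -- multiples of periods
  have col1 : ∀ i j (k : ℕ), T₁ i (j + k * σ₁) = T₁ i j := by
    intro i j k
    induction k with
    | zero => simp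
    | succ k ih =>
      have : j + (k + 1) * σ₁ = (j + k * σ₁) + σ₁ := by ring
      rw [this, hSper1, ih]
  have col2 : ∀ i j (k : ℕ), T₂ i (j + k * σ₂) = T₂ i j := by
    intro i j k
    induction k with
    | zero => simp
    | succ k ih =>
      have : j + (k + 1) * σ₂ = (j + k * σ₂) + σ₂ := by ring
      rw [this, hSper2, ih]
  have row2 : ∀ i j (k : ℕ), T₂ (i + k * τ₂) j = T₂ i j := by
    intro i j k
    induction k with
    | zero => simp
    | succ k ih =>
      have : i + (k + 1) * τ₂ = (i + k * τ₂) + τ₂ := by ring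
      rw [this, hTper2, ih]
  -- full quadrant equality
  have quad : ∀ s t, T₁ (i₀ + s) (j₀ + t) = T₂ (k₀ + s) (m₀ + t) := by
    intro s
    induction s with
    | zero => simpa using prop _ _ _ _ heq
    | succ s ih =>
      have h0 := ih 0
      have h1' := ih 1
      simp only [Nat.add_zero] at h0
      have cell : T₁ (i₀ + s + 1) (j₀ + 1) = T₂ (k₀ + s + 1) (m₀ + 1) := by
        rw [← hrule1 (i₀ + s) j₀, ← hrule2 (k₀ + s) m₀, h0, h1']
      have prop' := prop _ _ _ _ cell
      intro t
      cases t with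
      | zero =>
        have hN : 1 ≤ σ₂ * σ₁ := Nat.one_le_iff_ne_zero.mpr (by positivity)
        have key := prop' (σ₂ * σ₁ - 1)
        have e1 : (j₀ + 1) + (σ₂ * σ₁ - 1) = j₀ + σ₂ * σ₁ := by omega
        have e2 : (m₀ + 1) + (σ₂ * σ₁ - 1) = m₀ + σ₂ * σ₁ := by omega
        rw [e1, e2] at key
        have c1 := col1 (i₀ + s + 1) j₀ σ₂
        have c2 := col2 (k₀ + s + 1) m₀ σ₁
        rw [mul_comm σ₁ σ₂] at c2
        have : T₁ (i₀ + s + 1) j₀ = T₂ (k₀ + s + 1) m₀ := by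
          rw [← c1, ← c2]; exact key
        simpa [Nat.add_assoc] using this
      | succ t =>
        have := prop' t
        have e1 : (j₀ + 1) + t = j₀ + (t + 1) := by omega
        have e2 : (m₀ + 1) + t = m₀ + (t + 1) := by omega
        rw [e1, e2] at this
        simpa [Nat.add_assoc] using this
  -- build the identification, contradiction
  apply hni
  refine ⟨i₀ + k₀ * (τ₂ - 1), j₀ + m₀ * (σ₂ - 1), fun i j => ?_⟩
  have e1 : i + (i₀ + k₀ * (τ₂ - 1)) = i₀ + (i + k₀ * (τ₂ - 1)) := by ring
  have e2 : j + (j₀ + m₀ * (σ₂ - 1)) = j₀ + (j + m₀ * (σ₂ - 1)) := by ring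
  rw [e1, e2, quad (i + k₀ * (τ₂ - 1)) (j + m₀ * (σ₂ - 1))]
  have e3 : k₀ + (i + k₀ * (τ₂ - 1)) = i + k₀ * τ₂ := by
    have := mul_pred_add (a := k₀) hτ₂; omega
  have e4 : m₀ + (j + m₀ * (σ₂ - 1)) = j + m₀ * σ₂ := by
    have := mul_pred_add (a := m₀) hσ₂; omega
  rw [e3, e4, row2, col2]
end

section
/- Let f be an n-state 2-neighbor cellular automaton rule and let T be the tile of a periodic solution of f with temporal period τ and spatial period σ, with columns A_0, …, A_{σ−1} viewed as labels of length τ. Then the periodic solution is weakly robust if and only if A_j ⇒ A_{(j+1) mod σ} under f for every j = 0, …, σ − 1, i.e., each column decides the column to its right. -/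
open Filter

namespace WRaux

variable {n : ℕ}

lemma caTraj_add (f : CARule n) (ξ : ℤ → Fin n) (a b : ℕ) :
    caTraj f ξ (a + b) = caTraj f (caTraj f ξ a) b := by
  induction b with
  | zero => rfl
  | succ b ih =>
      show caStep f (caTraj f ξ (a + b)) = _
      rw [ih]; rfl

lemma col_step (f : CARule n) (ξ : ℤ → Fin n) (t : ℕ) (z : ℤ) :
    caTraj f ξ (t+1) (z+1) = f (caTraj f ξ t z) (caTraj f ξ t (z+1)) := by
  show f (caTraj f ξ t (z+1-1)) _ = _
  rw [add_sub_cancel_right]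

lemma spatial (f : CARule n) (ξ : ℤ → Fin n) (σ : ℕ)
    (hσ : ∀ x : ℤ, ξ (x + (σ:ℤ)) = ξ x) (t : ℕ) :
    ∀ x : ℤ, caTraj f ξ t (x + (σ:ℤ)) = caTraj f ξ t x := by
  induction t with
  | zero => exact hσ
  | succ t ih =>
      intro x
      show f (caTraj f ξ t (x + (σ:ℤ) - 1)) (caTraj f ξ t (x + (σ:ℤ)))
        = f (caTraj f ξ t (x - 1)) (caTraj f ξ t x)
      rw [show x + (σ:ℤ) - 1 = (x - 1) + (σ:ℤ) by ring, ih, ih]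

lemma spatial_int (f : CARule n) (ξ : ℤ → Fin n) (σ : ℕ)
    (hσ : ∀ x : ℤ, ξ (x + (σ:ℤ)) = ξ x) (t : ℕ) (k x : ℤ) :
    caTraj f ξ t (x + k * (σ:ℤ)) = caTraj f ξ t x :=
  (Function.Periodic.int_mul (spatial f ξ σ hσ t) k) x

lemma time_mul (f : CARule n) (ξ : ℤ → Fin n) (τ : ℕ) (hτ : caTraj f ξ τ = ξ)
    (m t : ℕ) : caTraj f ξ (m * τ + t) = caTraj f ξ t := by
  induction m with
  | zero => simp
  | succ m ih =>
      rw [show (m+1) * τ + t = τ + (m * τ + t) by ring, caTraj_add, hτ, ih]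

/-- The chase sequence along the column `A`, started at phase `t₀`. -/
def gchase (f : CARule n) (A : ℕ → Fin n) (t₀ : ℕ) (c₀ : Fin n) : ℕ → Fin n
  | 0 => c₀
  | k+1 => f (A (t₀ + k)) (gchase f A t₀ c₀ k)

lemma gchase_congr (f : CARule n) {A A' : ℕ → Fin n} {t₀ t₀' : ℕ}
    (h : ∀ t, A (t₀ + t) = A' (t₀' + t)) (c₀ : Fin n) :
    ∀ k, gchase f A t₀ c₀ k = gchase f A' t₀' c₀ k := by
  intro k
  induction k with
  | zero => rfl
  | succ k ih => show f _ _ = f _ _; rw [h k, ih]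

lemma gchase_add (f : CARule n) (A : ℕ → Fin n) (t₀ : ℕ) (c₀ : Fin n) (a : ℕ) :
    ∀ b, gchase f A t₀ c₀ (a + b) = gchase f A (t₀ + a) (gchase f A t₀ c₀ a) b := by
  intro b
  induction b with
  | zero => rfl
  | succ b ih =>
      show f (A (t₀ + (a + b))) (gchase f A t₀ c₀ (a + b)) = f (A ((t₀ + a) + b)) _
      rw [ih, Nat.add_assoc]

lemma chaseSeq_eq (f : CARule n) (A : ℕ → Fin n) (c₀ : Fin n) :
    ∀ k, chaseSeq f A c₀ k = gchase f A 0 c₀ k := by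
  intro k
  induction k with
  | zero => rfl
  | succ k ih => show f (A k) _ = f (A (0 + k)) _; rw [ih, Nat.zero_add]

lemma pers (f : CARule n) (ξ : ℤ → Fin n) (z : ℤ) (t₀ : ℕ) (c₀ : Fin n) {k : ℕ}
    (h : gchase f (fun t => caTraj f ξ t z) t₀ c₀ k = caTraj f ξ (t₀ + k) (z+1)) :
    ∀ k', k ≤ k' →
      gchase f (fun t => caTraj f ξ t z) t₀ c₀ k' = caTraj f ξ (t₀ + k') (z+1) := by
  intro k' hk
  induction k', hk using Nat.le_induction with
  | base => exact h
  | succ m hm ih =>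
      show f (caTraj f ξ (t₀ + m) z) (gchase f (fun t => caTraj f ξ t z) t₀ c₀ m)
        = caTraj f ξ ((t₀ + m) + 1) (z+1)
      rw [ih, col_step]

lemma left_agree (f : CARule n) {η ρ : ℤ → Fin n} {z : ℤ}
    (h : ∀ x ≤ z, η x = ρ x) :
    ∀ k, ∀ x ≤ z, caTraj f η k x = caTraj f ρ k x := by
  intro k
  induction k with
  | zero => exact h
  | succ k ih =>
      intro x hx
      show f (caTraj f η k (x-1)) (caTraj f η k x)
        = f (caTraj f ρ k (x-1)) (caTraj f ρ k x)
      rw [ih (x-1) (by omega), ih x hx]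

lemma chase_ident (f : CARule n) (ξ η : ℤ → Fin n) (s : ℕ) (z : ℤ)
    (h : ∀ k, caTraj f η k z = caTraj f ξ (s + k) z) :
    ∀ k, caTraj f η k (z+1) = gchase f (fun t => caTraj f ξ t z) s (η (z+1)) k := by
  intro k
  induction k with
  | zero => rfl
  | succ k ih =>
      rw [col_step, ih, h k]
      rfl

end WRaux

open WRaux in

/-- a periodic solution is weakly robust if and only if each column
of its tile decides the column to its right. -/
theorem weakly_robust_iff_columns_decide {n : ℕ} (f : CARule n)
    (ξ : ℤ → Fin n) (τ σ : ℕ) (hPS : IsPS f ξ τ σ) :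
    IsWeaklyRobust f ξ ↔
      ∀ j : ℕ, j < σ →
        Decides f (fun t => caTraj f ξ t (j : ℤ))
          (fun t => caTraj f ξ t ((j : ℤ) + 1)) := by
  obtain ⟨hτpos, hσpos, hsp, -, hτ, -⟩ := hPS
  constructor
  · -- weakly robust → columns decide
    intro hWR j hj
    constructor
    · intro i
      exact (col_step f ξ i (j:ℤ)).symm
    · intro c₀
      by_contra hcon
      push_neg at hcon
      set η := Function.update ξ ((j:ℤ)+1) c₀ with hηdef
      have hupd : ∀ x ≤ (j:ℤ), η x = ξ x := by
        intro x hx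
        exact Function.update_of_ne (by omega) _ _
      have hproper : IsProper ξ η := ⟨j, hupd⟩
      have hC : ∀ t, ∀ x ≤ (j:ℤ), caTraj f η t x = caTraj f ξ t x :=
        left_agree f hupd
      have hD : ∀ t, caTraj f η t ((j:ℤ)+1)
          = chaseSeq f (fun t => caTraj f ξ t (j:ℤ)) c₀ t := by
        intro t
        induction t with
        | zero => exact Function.update_self _ _ _
        | succ t ih =>
            rw [col_step, ih, hC t (j:ℤ) le_rfl]
            rfl
      obtain ⟨v, hv, hev⟩ := hWR
      have h2 : ∀ᶠ t : ℕ in atTop, ((j:ℝ)+1) ≤ v * t := by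
        have : Tendsto (fun t : ℕ => v * t) atTop atTop :=
          Tendsto.const_mul_atTop hv tendsto_natCast_atTop_atTop
        exact this.eventually_ge_atTop _
      obtain ⟨t, h1, h2⟩ := ((hev η hproper).and h2).exists
      have h3 := h1 ((j:ℤ)+1) (by push_cast; exact h2)
      rw [hD t] at h3
      exact hcon t h3
  · -- columns decide → weakly robust
    intro H
    have claimA : ∀ j : ℕ, j < σ → ∀ r : ℕ, ∀ c₀ : Fin n,
        ∃ k₀, gchase f (fun t => caTraj f ξ t (j:ℤ)) r c₀ k₀
          = caTraj f ξ (r + k₀) ((j:ℤ)+1) := by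
      intro j hj r c₀
      have hge : r + 1 ≤ (r+1) * τ := Nat.le_mul_of_pos_right _ hτpos
      set A := fun t => caTraj f ξ t (j:ℤ) with hA
      set a := (r+1) * τ - r with ha_def
      have ha : r + a = (r+1) * τ := by omega
      set c₁ := gchase f A r c₀ a with hc₁
      obtain ⟨k, hk⟩ := (H j hj).2 c₁
      refine ⟨a + k, ?_⟩
      have h1 : gchase f A r c₀ (a + k) = gchase f A (r + a) c₁ k :=
        gchase_add f A r c₀ a k
      have h2 : gchase f A (r + a) c₁ k = gchase f A 0 c₁ k := by
        refine gchase_congr f (fun t => ?_) c₁ k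
        show caTraj f ξ (r + a + t) (j:ℤ) = caTraj f ξ (0 + t) (j:ℤ)
        rw [show r + a + t = (r+1)*τ + t by omega, time_mul f ξ τ hτ, Nat.zero_add]
      rw [h1, h2, ← chaseSeq_eq, hk]
      show caTraj f ξ k ((j:ℤ)+1) = caTraj f ξ (r + (a + k)) ((j:ℤ)+1)
      rw [show r + (a + k) = (r+1)*τ + k by omega, time_mul f ξ τ hτ]
    have claimB : ∃ J : ℕ, ∀ (z : ℤ) (t₀ : ℕ) (c₀ : Fin n) (k : ℕ), J ≤ k →
        gchase f (fun t => caTraj f ξ t z) t₀ c₀ k = caTraj f ξ (t₀ + k) (z+1) := by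
      have hsel : ∀ p : (ℕ × ℕ) × Fin n, ∃ k₀, p.1.1 < σ →
          gchase f (fun t => caTraj f ξ t ((p.1.1 : ℕ):ℤ)) p.1.2 p.2 k₀
            = caTraj f ξ (p.1.2 + k₀) (((p.1.1 : ℕ):ℤ)+1) := by
        intro p
        by_cases hj : p.1.1 < σ
        · obtain ⟨k₀, hk⟩ := claimA p.1.1 hj p.1.2 p.2
          exact ⟨k₀, fun _ => hk⟩
        · exact ⟨0, fun h => absurd h hj⟩
      choose K hK using hsel
      refine ⟨((Finset.range σ ×ˢ Finset.range τ) ×ˢ Finset.univ).sup K, ?_⟩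
      intro z t₀ c₀ k hk
      have hσZ : (0:ℤ) < (σ:ℤ) := by exact_mod_cast hσpos
      set j := (z % (σ:ℤ)).toNat with hj_def
      have hjz : (j:ℤ) = z % (σ:ℤ) := Int.toNat_of_nonneg (Int.emod_nonneg z (by omega))
      have hjlt : j < σ := by
        have h5 := Int.emod_lt_of_pos z hσZ
        omega
      have hzz : (j:ℤ) + (z / (σ:ℤ)) * (σ:ℤ) = z := by
        rw [hjz, mul_comm]
        exact Int.emod_add_mul_ediv z (σ:ℤ)
      have hcolz : ∀ t : ℕ, caTraj f ξ t z = caTraj f ξ t (j:ℤ) := by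
        intro t
        rw [← hzz]
        exact spatial_int f ξ σ hsp t _ _
      have hcolz1 : ∀ t : ℕ, caTraj f ξ t (z+1) = caTraj f ξ t ((j:ℤ)+1) := by
        intro t
        have hz1 : z + 1 = ((j:ℤ)+1) + z / (σ:ℤ) * (σ:ℤ) := by linarith [hzz]
        rw [hz1]
        exact spatial_int f ξ σ hsp t _ _
      have hph : ∀ (t : ℕ) (w : ℤ), caTraj f ξ (t₀ + t) w = caTraj f ξ (t₀ % τ + t) w := by
        intro t w
        have hdm := Nat.div_add_mod t₀ τ
        have e : (t₀ / τ) * τ + (t₀ % τ + t) = t₀ + t := by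
          rw [← Nat.add_assoc, Nat.mul_comm, hdm]
        rw [← e, time_mul f ξ τ hτ]
      have e1 : gchase f (fun t => caTraj f ξ t z) t₀ c₀ k
          = gchase f (fun t => caTraj f ξ t (j:ℤ)) (t₀ % τ) c₀ k := by
        refine gchase_congr f (fun t => ?_) c₀ k
        show caTraj f ξ (t₀ + t) z = caTraj f ξ (t₀ % τ + t) (j:ℤ)
        rw [hph t z, hcolz]
      have hmem : ((j, t₀ % τ), c₀) ∈
          (Finset.range σ ×ˢ Finset.range τ) ×ˢ (Finset.univ : Finset (Fin n)) := by
        simp [Finset.mem_product, hjlt, Nat.mod_lt _ hτpos]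
      have hKle : K ((j, t₀ % τ), c₀) ≤ k := le_trans (Finset.le_sup hmem) hk
      have h0 := hK ((j, t₀ % τ), c₀) hjlt
      have h2 := pers f ξ (j:ℤ) (t₀ % τ) c₀ h0 k hKle
      rw [e1, h2, hph k (z+1), hcolz1]
    obtain ⟨J, hJ⟩ := claimB
    set J' := J + 1 with hJ'def
    have hJ'pos : 0 < J' := Nat.succ_pos J
    have main : ∀ η : ℤ → Fin n, ∀ y : ℤ, (∀ x ≤ y, η x = ξ x) →
        ∀ m t : ℕ, m * J' ≤ t → ∀ x : ℤ, x ≤ y + (m:ℤ) →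
          caTraj f η t x = caTraj f ξ t x := by
      intro η y hy m
      induction m with
      | zero =>
          intro t _ x hx
          exact left_agree f hy t x (by simpa using hx)
      | succ m ih =>
          intro t ht x hx
          set s := t - J' with hs
          have hts : t = s + J' := by
            have : J' ≤ t := le_trans (by nlinarith) ht
            omega
          have hsm : m * J' ≤ s := by
            have h6 : m * J' + J' ≤ t := by
              calc m * J' + J' = (m+1) * J' := by ring
                _ ≤ t := ht
            omega
          have hbase : ∀ x ≤ y + (m:ℤ), caTraj f η s x = caTraj f ξ s x :=
            fun x hx => ih s hsm x hx
          have hleft : ∀ k, ∀ x ≤ y + (m:ℤ),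
              caTraj f η (s+k) x = caTraj f ξ (s+k) x := by
            intro k x hx
            have h7 := left_agree f hbase k x hx
            rwa [← caTraj_add, ← caTraj_add] at h7
          push_cast at hx
          rcases (show x ≤ y + (m:ℤ) ∨ x = y + (m:ℤ) + 1 by omega) with h | h
          · have h8 := hleft J' x h
            rwa [← hts] at h8
          · subst h
            set z := y + (m:ℤ) with hzdef
            have hcol : ∀ k, caTraj f (caTraj f η s) k z = caTraj f ξ (s + k) z := by
              intro k
              rw [← caTraj_add]
              exact hleft k z le_rfl
            have hch := chase_ident f ξ (caTraj f η s) s z hcol J'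
            have hJa := hJ z s (caTraj f η s (z+1)) J' (by omega)
            rw [hJa] at hch
            calc caTraj f η t (z+1) = caTraj f (caTraj f η s) J' (z+1) := by
                  rw [hts, caTraj_add]
              _ = caTraj f ξ (s + J') (z+1) := hch
              _ = caTraj f ξ t (z+1) := by rw [← hts]
    refine ⟨1 / (2 * (J':ℝ)), by positivity, ?_⟩
    intro η hη
    obtain ⟨y, hy⟩ := hη
    rw [Filter.eventually_atTop]
    refine ⟨2 * J' * ((1 - y).toNat + 1), ?_⟩
    intro t ht x hx
    set m := t / J' with hmdef
    have hmain := main η y hy m t (Nat.div_mul_le_self t J')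
    apply hmain
    have h1nat : t < J' * m + J' := by
      conv_lhs => rw [← Nat.div_add_mod t J']
      exact Nat.add_lt_add_left (Nat.mod_lt t hJ'pos) _
    have hu : (1 - y : ℤ) ≤ ((1 - y).toNat : ℤ) + 1 := by omega
    have hJR : (1:ℝ) ≤ (J':ℝ) := by exact_mod_cast hJ'pos
    have h1 : (t:ℝ) < (J':ℝ) * m + J' := by exact_mod_cast h1nat
    have h3 : 2 * (J':ℝ) * (((1 - y).toNat : ℝ) + 1) ≤ t := by exact_mod_cast ht
    have h4 : (1:ℝ) - (y:ℝ) ≤ ((1 - y).toNat : ℝ) + 1 := by exact_mod_cast hu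
    have hgoal : (x:ℝ) ≤ (y:ℝ) + (m:ℝ) := by
      have hxr : (x:ℝ) ≤ 1 / (2 * (J':ℝ)) * t := hx
      have hJpos : (0:ℝ) < (J':ℝ) := by linarith
      have hs1 : 2 * (J':ℝ) * (x:ℝ) ≤ t := by
        rw [div_mul_eq_mul_div, le_div_iff₀ (by positivity)] at hxr
        linarith [hxr]
      nlinarith [mul_le_mul_of_nonneg_left h4 (by positivity : (0:ℝ) ≤ 2 * (J':ℝ))]
    exact_mod_cast hgoal
end

section
/- If T is the tile of a weakly robust periodic solution with temporal period τ, then every column of T, viewed as a word of length τ, is aperiodic, i.e., has minimal period exactly τ. -/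
open Filter

/-
If a column of `ξ` had a shorter period `τ'`, splice `ξ` (left of that column) with `ξ_{τ'}`
(right of it). The column of the spliced configuration is unchanged, so to the right of it the
spliced orbit is the orbit of `ξ` shifted by `τ'` in time. The spliced configuration is proper,
so weak robustness makes its orbit agree with that of `ξ` on a whole spatial period at some
time `t`; hence `ξ_{τ' + t} = ξ_t`, and since the orbit of `ξ` is periodic, `ξ_{τ'} = ξ`.
-/

open Function

theorem Function.Periodic.eq_of_eqOn_Ico {α β : Type*} [AddCommGroup α] [LinearOrder α]
    [IsOrderedAddMonoid α] [Archimedean α] {g h : α → β} {c : α}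
    (hg : Periodic g c) (hh : Periodic h c) (hc : 0 < c) (a : α)
    (heq : Set.EqOn g h (Set.Ico a (a + c))) : g = h := by
  funext x
  obtain ⟨k, hk, -⟩ := existsUnique_add_zsmul_mem_Ico hc x a
  rw [← hg.zsmul k x, ← hh.zsmul k x]
  exact heq hk

section CellularAutomaton

variable {n : ℕ} (f : CARule n)

theorem caTraj_eq_iterate (ξ : ℤ → Fin n) (t : ℕ) : caTraj f ξ t = (caStep f)^[t] ξ := by
  induction t with
  | zero => rfl
  | succ t ih => rw [iterate_succ_apply', ← ih]; rfl

theorem caTraj_add (ξ : ℤ → Fin n) (s t : ℕ) :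
    caTraj f ξ (s + t) = caTraj f (caTraj f ξ s) t := by
  simp only [caTraj_eq_iterate, add_comm s, iterate_add_apply]

theorem caTraj_periodic {ξ : ℤ → Fin n} {c : ℤ} (hξ : Periodic ξ c) (t : ℕ) :
    Periodic (caTraj f ξ t) c := by
  induction t with
  | zero => exact hξ
  | succ t ih =>
    intro x
    change f _ _ = f _ _
    rw [add_sub_right_comm, ih, ih]

theorem caTraj_eqOn_Iic {ξ η : ℤ → Fin n} {x : ℤ} (h : Set.EqOn η ξ (Set.Iic x)) (t : ℕ) :
    Set.EqOn (caTraj f η t) (caTraj f ξ t) (Set.Iic x) := by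
  induction t with
  | zero => exact h
  | succ t ih =>
    intro y (hy : y ≤ x)
    change f _ _ = f _ _
    rw [ih (show y - 1 ≤ x by omega), ih hy]

theorem caTraj_eqOn_Ici {ξ η : ℤ → Fin n} {x : ℤ} (h : Set.EqOn η ξ (Set.Ici x))
    (hcol : ∀ t, caTraj f η t x = caTraj f ξ t x) (t : ℕ) :
    Set.EqOn (caTraj f η t) (caTraj f ξ t) (Set.Ici x) := by
  induction t with
  | zero => exact h
  | succ t ih =>
    intro y (hy : x ≤ y)
    obtain rfl | hlt := hy.eq_or_lt
    · exact hcol (t + 1)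
    · change f _ _ = f _ _
      rw [ih (show x ≤ y - 1 by omega), ih hy]

def timeShiftSplice (ξ : ℤ → Fin n) (τ' : ℕ) (x : ℤ) : ℤ → Fin n :=
  fun y => if y ≤ x then ξ y else caTraj f ξ τ' y

theorem isProper_timeShiftSplice (ξ : ℤ → Fin n) (τ' : ℕ) (x : ℤ) :
    IsProper ξ (timeShiftSplice f ξ τ' x) :=
  ⟨x, fun _ hy => if_pos hy⟩

theorem caTraj_timeShiftSplice_of_le {ξ : ℤ → Fin n} {τ' : ℕ} {x : ℤ}
    (hcol : ∀ t, caTraj f ξ (t + τ') x = caTraj f ξ t x) (t : ℕ) {y : ℤ} (hy : x ≤ y) :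
    caTraj f (timeShiftSplice f ξ τ' x) t y = caTraj f ξ (τ' + t) y := by
  have hleft : Set.EqOn (timeShiftSplice f ξ τ' x) ξ (Set.Iic x) := fun _ hz => if_pos hz
  rw [caTraj_add]
  refine caTraj_eqOn_Ici f (fun z (hz : x ≤ z) => ?_) (fun s => ?_) t hy
  · obtain rfl | hlt := hz.eq_or_lt
    · rw [hleft Set.self_mem_Iic, ← zero_add τ', hcol 0]
      rfl
    · exact if_neg hlt.not_ge
  · rw [caTraj_eqOn_Iic f hleft s Set.self_mem_Iic, ← caTraj_add, add_comm, hcol]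

theorem isPeriodicPt_caStep_iff (ξ : ℤ → Fin n) (t : ℕ) :
    IsPeriodicPt (caStep f) t ξ ↔ caTraj f ξ t = ξ := by
  rw [IsPeriodicPt, IsFixedPt, caTraj_eq_iterate]

theorem caTraj_eq_self_of_caTraj_add_eq {ξ : ℤ → Fin n} {τ τ' t : ℕ} (hτ : 0 < τ)
    (hper : caTraj f ξ τ = ξ) (hshift : caTraj f ξ (τ' + t) = caTraj f ξ t) :
    caTraj f ξ τ' = ξ := by
  have hξ : ξ ∈ periodicPts (caStep f) :=
    mk_mem_periodicPts hτ ((isPeriodicPt_caStep_iff f ξ τ).2 hper)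
  have hξt : IsPeriodicPt (caStep f) τ' ((caStep f)^[t] ξ) := by
    rw [isPeriodicPt_caStep_iff, ← caTraj_eq_iterate, ← caTraj_add, add_comm, hshift]
  exact (isPeriodicPt_caStep_iff f ξ τ').1
    (isPeriodicPt_of_mem_periodicPts_of_isPeriodicPt_iterate hξ hξt)

theorem IsWeaklyRobust.eventually_eqOn_Iic {ξ η : ℤ → Fin n} (hWR : IsWeaklyRobust f ξ)
    (hη : IsProper ξ η) (R : ℤ) :
    ∀ᶠ t in atTop, Set.EqOn (caTraj f η t) (caTraj f ξ t) (Set.Iic R) := by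
  obtain ⟨v, hv, hagree⟩ := hWR
  have hfar : ∀ᶠ t : ℕ in atTop, (R : ℝ) ≤ v * t :=
    (tendsto_natCast_atTop_atTop.const_mul_atTop hv).eventually_ge_atTop _
  filter_upwards [hagree η hη, hfar] with t ht hRt y (hy : y ≤ R)
  exact ht y (le_trans (by exact_mod_cast hy) hRt)

end CellularAutomaton

/-- every column of the tile of a weakly robust periodic solution
with temporal period `τ` is aperiodic, i.e. has minimal period exactly `τ`. -/
theorem wrps_columns_aperiodic {n : ℕ} (f : CARule n) (ξ : ℤ → Fin n)
    (τ σ : ℕ) (hPS : IsPS f ξ τ σ) (hWR : IsWeaklyRobust f ξ) :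
    ∀ x : ℤ, ∀ τ' : ℕ, 0 < τ' →
      (∀ t : ℕ, caTraj f ξ (t + τ') x = caTraj f ξ t x) → τ ≤ τ' := by
  obtain ⟨hτ, hσ, hspat, -, htemp, hτmin⟩ := hPS
  intro x τ' hτ' hcol
  have hξper : Periodic ξ (σ : ℤ) := hspat
  obtain ⟨t, ht⟩ :=
    (hWR.eventually_eqOn_Iic f (isProper_timeShiftSplice f ξ τ' x) (x + σ)).exists
  have hshift : caTraj f ξ (τ' + t) = caTraj f ξ t :=
    (caTraj_periodic f hξper _).eq_of_eqOn_Ico (caTraj_periodic f hξper t)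
      (by exact_mod_cast hσ) x fun y hy =>
        (caTraj_timeShiftSplice_of_le f hcol t hy.1).symm.trans (ht hy.2.le)
  exact hτmin τ' hτ' (caTraj_eq_self_of_caTraj_add_eq f hτ htemp hshift)
end

section
/- Fix an integer n ≥ 2. For integers 0 ≤ k ≤ n−1 and ℓ ≥ 0, let A_{k,ℓ} = C(n−1, k) · (ℓ+1)^k · (n−1−ℓ)^{n−1−k} (an integer, possibly negative when ℓ > n−1), and let P_m = n^m − (n−1)^m. Define S_1(ℓ) = Σ_{k=0}^{n−1} A_{k,ℓ} · (k+1) · n^{n−2}, and recursively S_m(ℓ) = Σ_{k=0}^{n−1} A_{k,ℓ} · S_{m−1}(k) for m ≥ 2. Then for every m ≥ 1 and every integer ℓ ≥ 0, S_m(ℓ) = n^{(m+1)(n−2)} · (P_{m+1} + ℓ · (n−1)^m). -/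
lemma sum_pow_aux (x y : ℤ) (N : ℕ) :
    ∑ k ∈ Finset.range (N+1), (Nat.choose N k : ℤ) * x^k * y^(N-k) = (x+y)^N := by
  rw [add_pow]
  exact Finset.sum_congr rfl fun k _ => by ring

lemma sum_mul_pow_aux (x y : ℤ) (N : ℕ) :
    ∑ k ∈ Finset.range (N+1), (k:ℤ) * (Nat.choose N k : ℤ) * x^k * y^(N-k)
      = N * x * (x+y)^(N-1) := by
  cases N with
  | zero => simp
  | succ M =>
    rw [Finset.sum_range_succ']
    have h1 : ∀ j ∈ Finset.range (M+1),
        ((j+1 : ℕ):ℤ) * (Nat.choose (M+1) (j+1) : ℤ) * x^(j+1) * y^(M+1-(j+1))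
        = ((M:ℤ)+1) * x * ((Nat.choose M j : ℤ) * x^j * y^(M-j)) := by
      intro j hj
      have h' : ((M:ℤ)+1) * (Nat.choose M j : ℤ) = (Nat.choose (M+1) (j+1) : ℤ) * ((j:ℤ)+1) := by
        exact_mod_cast congrArg (Nat.cast : ℕ → ℤ) (Nat.add_one_mul_choose_eq M j)
      have h2 : M + 1 - (j+1) = M - j := by omega
      rw [h2]
      calc ((j+1 : ℕ):ℤ) * (Nat.choose (M+1) (j+1) : ℤ) * x^(j+1) * y^(M-j)
          = ((Nat.choose (M+1) (j+1) : ℤ) * ((j:ℤ)+1)) * x^(j+1) * y^(M-j) := by push_cast; ring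
        _ = (((M:ℤ)+1) * (Nat.choose M j : ℤ)) * x^(j+1) * y^(M-j) := by rw [← h']
        _ = ((M:ℤ)+1) * x * ((Nat.choose M j : ℤ) * x^j * y^(M-j)) := by ring
    rw [Finset.sum_congr rfl h1, ← Finset.mul_sum, sum_pow_aux]
    push_cast
    simp

/-- the combinatorial identity
`S_m(ℓ) = n^{(m+1)(n−2)}·(P_{m+1} + ℓ·(n−1)^m)` where
`A_{k,ℓ} = C(n−1,k)·(ℓ+1)^k·(n−1−ℓ)^{n−1−k}`, `P_m = n^m − (n−1)^m`,
`S_1(ℓ) = Σ_{k<n} A_{k,ℓ}(k+1)n^{n−2}` and `S_m(ℓ) = Σ_{k<n} A_{k,ℓ} S_{m−1}(k)`. -/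
theorem nested_sum_identity (n : ℕ) (hn : 2 ≤ n) (A : ℕ → ℕ → ℤ) (S : ℕ → ℕ → ℤ)
    (hA : ∀ k, k ≤ n - 1 → ∀ l : ℕ,
        A k l = (Nat.choose (n - 1) k : ℤ) * ((l : ℤ) + 1) ^ k *
          ((n : ℤ) - 1 - (l : ℤ)) ^ (n - 1 - k))
    (hS1 : ∀ l : ℕ,
        S 1 l = ∑ k ∈ Finset.range n, A k l * ((k : ℤ) + 1) * (n : ℤ) ^ (n - 2))
    (hSrec : ∀ m, 2 ≤ m → ∀ l : ℕ,
        S m l = ∑ k ∈ Finset.range n, A k l * S (m - 1) k) :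
    ∀ m, 1 ≤ m → ∀ l : ℕ,
      S m l = (n : ℤ) ^ ((m + 1) * (n - 2)) *
        (((n : ℤ) ^ (m + 1) - ((n : ℤ) - 1) ^ (m + 1)) + (l : ℤ) * ((n : ℤ) - 1) ^ m) := by
  obtain ⟨e, rfl⟩ : ∃ e, n = e + 2 := ⟨n - 2, by omega⟩
  have hn1 : e + 2 - 1 = e + 1 := by omega
  have hn2 : e + 2 - 2 = e := by omega
  set nz : ℤ := ((e+2 : ℕ) : ℤ) with hnz
  have hxy : ∀ l : ℕ, ((l:ℤ) + 1) + (nz - 1 - (l:ℤ)) = nz := fun l => by ring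
  -- the two key sums
  have key0 : ∀ l : ℕ, ∑ k ∈ Finset.range (e+2),
      (Nat.choose (e+1) k : ℤ) * ((l:ℤ)+1)^k * (nz - 1 - (l:ℤ))^(e+1-k) = nz^(e+1) := by
    intro l
    have := sum_pow_aux ((l:ℤ)+1) (nz - 1 - (l:ℤ)) (e+1)
    rwa [hxy l] at this
  have key1 : ∀ l : ℕ, ∑ k ∈ Finset.range (e+2),
      (k:ℤ) * ((Nat.choose (e+1) k : ℤ) * ((l:ℤ)+1)^k * (nz - 1 - (l:ℤ))^(e+1-k))
        = ((e:ℤ)+1) * ((l:ℤ)+1) * nz^e := by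
    intro l
    have := sum_mul_pow_aux ((l:ℤ)+1) (nz - 1 - (l:ℤ)) (e+1)
    rw [hxy l] at this
    simp only [Nat.add_sub_cancel] at this
    push_cast at this ⊢
    rw [← this]
    exact Finset.sum_congr (by norm_num) fun k _ => by ring
  -- general split lemma: ∑ A k l * (a + k * b) = a * nz^(e+1) + b * (e+1)(l+1) nz^e
  have split : ∀ (l : ℕ) (a b : ℤ),
      ∑ k ∈ Finset.range (e+2), A k l * (a + (k:ℤ) * b)
        = a * nz^(e+1) + b * (((e:ℤ)+1) * ((l:ℤ)+1) * nz^e) := by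
    intro l a b
    have : ∀ k ∈ Finset.range (e+2), A k l * (a + (k:ℤ) * b)
        = a * ((Nat.choose (e+1) k : ℤ) * ((l:ℤ)+1)^k * (nz - 1 - (l:ℤ))^(e+1-k))
          + b * ((k:ℤ) * ((Nat.choose (e+1) k : ℤ) * ((l:ℤ)+1)^k * (nz - 1 - (l:ℤ))^(e+1-k))) := by
      intro k hk
      rw [hA k (by simp at hk; omega) l]
      simp only [hn1]
      ring
    rw [Finset.sum_congr rfl this, Finset.sum_add_distrib, ← Finset.mul_sum, ← Finset.mul_sum,
      key0 l, key1 l]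
  intro m hm
  induction m, hm using Nat.le_induction with
  | base =>
    intro l
    rw [hS1 l, hn2]
    have : ∀ k ∈ Finset.range (e+2), A k l * ((k:ℤ) + 1) * nz ^ e
        = A k l * (nz ^ e + (k:ℤ) * nz ^ e) := fun k _ => by ring
    rw [Finset.sum_congr rfl this, split l (nz^e) (nz^e)]
    simp only [hnz]
    push_cast
    ring
  | succ m hm ih =>
    intro l
    rw [hSrec (m+1) (by omega) l]
    simp only [Nat.add_sub_cancel]
    have : ∀ k ∈ Finset.range (e+2), A k l * S m k
        = A k l * ((nz ^ ((m + 1) * e) * (nz ^ (m + 1) - (nz - 1) ^ (m + 1)))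
            + (k:ℤ) * (nz ^ ((m + 1) * e) * (nz - 1) ^ m)) := by
      intro k hk
      rw [ih k, hn2]
      ring
    rw [Finset.sum_congr rfl this, split l _ _]
    have hexp : (m + 1 + 1) * e = (m+1) * e + e := by ring
    rw [hexp]
    simp only [hnz]
    push_cast
    ring
end

section
/- Fix integers τ ≥ 1 and n ≥ 2, and fix b_0, …, b_{τ−1} ∈ ℤ_n. The number of τ-tuples (g_0, …, g_{τ−1}) of functions g_i : ℤ_n → ℤ_n satisfying: (i) g_i(b_i) = b_{(i+1) mod τ} for all i; and (ii) for every (i, j) ∈ ℤ_τ × ℤ_n, some iterate of the map F : ℤ_τ × ℤ_n → ℤ_τ × ℤ_n, F(i, j) = (i+1 mod τ, g_i(j)), sends (i, j) to (0, b_0); equals n^{τ(n−2)} · (n^τ − (n−1)^τ). -/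
open Finset Equiv Function
namespace DDC
set_option linter.unusedSectionVars false
attribute [local instance] Classical.propDecidable
variable {τ n : ℕ} [NeZero τ]

def stp (u : ZMod τ × Fin n → Fin n) (p : ZMod τ × Fin n) : ZMod τ × Fin n :=
  (p.1 + 1, u p)

lemma stp_iter_fst (u : ZMod τ × Fin n → Fin n) (p : ZMod τ × Fin n) (k : ℕ) :
    ((stp u)^[k] p).1 = p.1 + k := by
  induction k with
  | zero => simp
  | succ k ih =>
    rw [iterate_succ_apply']
    show ((stp u)^[k] p).1 + 1 = _
    rw [ih]; push_cast; ring

def Ret (u : ZMod τ × Fin n → Fin n) (x : Fin n) : Fin n :=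
  ((stp u)^[τ] ((0 : ZMod τ), x)).2

lemma stp_iter_tau (u : ZMod τ × Fin n → Fin n) (x : Fin n) :
    (stp u)^[τ] ((0 : ZMod τ), x) = (0, Ret u x) := by
  have h := stp_iter_fst u ((0 : ZMod τ), x) τ
  rw [ZMod.natCast_self, add_zero] at h
  exact Prod.ext h rfl

lemma stp_iter_tau_mul (u : ZMod τ × Fin n → Fin n) (x : Fin n) (t : ℕ) :
    (stp u)^[τ * t] ((0 : ZMod τ), x) = (0, (Ret u)^[t] x) := by
  induction t generalizing x with
  | zero => simp
  | succ t ih =>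
    have h : τ * (t + 1) = τ * t + τ := by ring
    rw [h, iterate_add_apply, stp_iter_tau, ih, ← iterate_succ_apply]

def condInv (U : Finset (ZMod τ × Fin n)) (u : ZMod τ × Fin n → Fin n) : Prop :=
  (∀ p ∈ U, stp u p ∈ U) ∧ Set.InjOn (stp u) ↑U

def U0 (U : Finset (ZMod τ × Fin n)) : Finset (Fin n) :=
  univ.filter (fun x => ((0 : ZMod τ), x) ∈ U)

lemma mem_U0 {U : Finset (ZMod τ × Fin n)} {x : Fin n} :
    x ∈ U0 U ↔ ((0 : ZMod τ), x) ∈ U := by simp [U0]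

lemma iter_mem {U : Finset (ZMod τ × Fin n)} {u} (h : condInv U u) {p} (hp : p ∈ U) (k : ℕ) :
    (stp u)^[k] p ∈ U := by
  induction k with
  | zero => simpa
  | succ k ih => rw [iterate_succ_apply']; exact h.1 _ ih

lemma iter_injOn {U : Finset (ZMod τ × Fin n)} {u} (h : condInv U u) (k : ℕ) :
    Set.InjOn ((stp u)^[k]) ↑U := by
  induction k with
  | zero => simp [Set.injOn_id]
  | succ k ih =>
    intro a ha b hb hab
    rw [iterate_succ_apply', iterate_succ_apply'] at hab
    exact ih ha hb (h.2 (iter_mem h ha k) (iter_mem h hb k) hab)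

lemma Ret_mem {U : Finset (ZMod τ × Fin n)} {u} (h : condInv U u) {x} (hx : x ∈ U0 U) :
    Ret u x ∈ U0 U := by
  rw [mem_U0] at hx ⊢
  have := iter_mem h hx τ
  rwa [stp_iter_tau] at this

lemma Ret_injOn {U : Finset (ZMod τ × Fin n)} {u} (h : condInv U u) {x y}
    (hx : x ∈ U0 U) (hy : y ∈ U0 U) (hxy : Ret u x = Ret u y) : x = y := by
  rw [mem_U0] at hx hy
  have := iter_injOn h τ hx hy (by rw [stp_iter_tau, stp_iter_tau, hxy])
  exact (Prod.ext_iff.mp this).2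

noncomputable def rho {U : Finset (ZMod τ × Fin n)} {u} (h : condInv U u) :
    Equiv.Perm {x // x ∈ U0 U} :=
  Equiv.ofBijective (fun z => ⟨Ret u z.1, Ret_mem h z.2⟩)
    (Finite.injective_iff_bijective.mp (fun a b hab => by
      exact Subtype.ext (Ret_injOn h a.2 b.2 (congrArg Subtype.val hab))))

lemma rho_apply {U : Finset (ZMod τ × Fin n)} {u} (h : condInv U u) (z) :
    (rho h z : Fin n) = Ret u z.1 := rfl

lemma rho_pow_apply {U : Finset (ZMod τ × Fin n)} {u} (h : condInv U u) (z) (t : ℕ) :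
    (((rho h) ^ t) z : Fin n) = (Ret u)^[t] z.1 := by
  induction t with
  | zero => simp
  | succ t ih =>
    rw [pow_succ', Equiv.Perm.mul_apply, rho_apply, ih]
    exact (iterate_succ_apply' _ _ _).symm

noncomputable def w (U : Finset (ZMod τ × Fin n)) (u : ZMod τ × Fin n → Fin n) : ℤ :=
  if h : condInv U u then (-1) ^ (U0 U).card * (Equiv.Perm.sign (rho h) : ℤ) else 0

lemma w_of_not {U : Finset (ZMod τ × Fin n)} {u} (h : ¬ condInv U u) : w U u = 0 :=
  dif_neg h

lemma w_of {U : Finset (ZMod τ × Fin n)} {u} (h : condInv U u) :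
    w U u = (-1) ^ (U0 U).card * (Equiv.Perm.sign (rho h) : ℤ) := dif_pos h

/-! ### w depends only on the values of `u` on `U` -/

lemma stp_eq_on {U : Finset (ZMod τ × Fin n)} {u v} (huv : ∀ p ∈ U, u p = v p)
    {p} (hp : p ∈ U) : stp u p = stp v p := by
  simp [stp, huv p hp]

lemma condInv_ext {U : Finset (ZMod τ × Fin n)} {u v} (huv : ∀ p ∈ U, u p = v p)
    (h : condInv U u) : condInv U v := by
  constructor
  · intro p hp; rw [← stp_eq_on huv hp]; exact h.1 p hp
  · intro a ha b hb hab
    exact h.2 ha hb (by rwa [stp_eq_on huv ha, stp_eq_on huv hb])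

lemma iter_eq_on {U : Finset (ZMod τ × Fin n)} {u v} (h : condInv U u)
    (huv : ∀ p ∈ U, u p = v p) {p} (hp : p ∈ U) (k : ℕ) :
    (stp v)^[k] p = (stp u)^[k] p := by
  induction k with
  | zero => rfl
  | succ k ih =>
    rw [iterate_succ_apply', iterate_succ_apply', ih]
    exact (stp_eq_on huv (iter_mem h hp k)).symm

lemma Ret_eq_on {U : Finset (ZMod τ × Fin n)} {u v} (h : condInv U u)
    (huv : ∀ p ∈ U, u p = v p) {x} (hx : x ∈ U0 U) : Ret v x = Ret u x := by
  unfold Ret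
  rw [iter_eq_on h huv (mem_U0.mp hx) τ]

lemma w_ext {U : Finset (ZMod τ × Fin n)} {u v} (huv : ∀ p ∈ U, u p = v p) :
    w U u = w U v := by
  by_cases h : condInv U u
  · have hv : condInv U v := condInv_ext huv h
    have hr : rho h = rho hv := by
      apply Equiv.ext
      intro z
      apply Subtype.ext
      rw [rho_apply, rho_apply, Ret_eq_on h huv z.2]
    rw [w_of h, w_of hv, hr]
  · have hv : ¬ condInv U v := fun hv => h (condInv_ext (fun p hp => (huv p hp).symm) hv)
    rw [w_of_not h, w_of_not hv]

/-! ### multiplicativity over disjoint invariant sets -/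

lemma condInv_union {A B : Finset (ZMod τ × Fin n)} {u} (hA : condInv A u)
    (hB : condInv B u) (hd : Disjoint A B) : condInv (A ∪ B) u := by
  constructor
  · intro p hp
    rcases mem_union.mp hp with h | h
    · exact mem_union_left _ (hA.1 p h)
    · exact mem_union_right _ (hB.1 p h)
  · intro a ha b hb hab
    simp only [coe_union, Set.mem_union, mem_coe] at ha hb
    rcases ha with ha | ha <;> rcases hb with hb | hb
    · exact hA.2 ha hb hab
    · exact (Finset.disjoint_left.mp hd
        (show stp u b ∈ A by rw [← hab]; exact hA.1 a ha) (hB.1 b hb)).elim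
    · exact (Finset.disjoint_left.mp hd
        (show stp u a ∈ A by rw [hab]; exact hA.1 b hb) (hB.1 a ha)).elim
    · exact hB.2 ha hb hab

lemma U0_union {A B : Finset (ZMod τ × Fin n)} : U0 (A ∪ B) = U0 A ∪ U0 B := by
  ext x; simp [mem_U0, mem_union]

lemma U0_disjoint {A B : Finset (ZMod τ × Fin n)} (hd : Disjoint A B) :
    Disjoint (U0 A) (U0 B) := by
  rw [Finset.disjoint_left]
  intro x hx hx'
  exact Finset.disjoint_left.mp hd (mem_U0.mp hx) (mem_U0.mp hx')

noncomputable def unionSplit {A B : Finset (ZMod τ × Fin n)} (hd : Disjoint A B) :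
    {x // x ∈ U0 (A ∪ B)} ≃ {x // x ∈ U0 A} ⊕ {x // x ∈ U0 B} where
  toFun z := if h : z.1 ∈ U0 A then Sum.inl ⟨z.1, h⟩ else
    Sum.inr ⟨z.1, mem_U0.mpr (by
      rcases mem_union.mp (mem_U0.mp z.2) with hh | hh
      · exact absurd (mem_U0.mpr hh) h
      · exact hh)⟩
  invFun s := s.elim (fun a => ⟨a.1, mem_U0.mpr (mem_union_left _ (mem_U0.mp a.2))⟩)
    (fun b => ⟨b.1, mem_U0.mpr (mem_union_right _ (mem_U0.mp b.2))⟩)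
  left_inv z := by
    dsimp only
    by_cases h : z.1 ∈ U0 A
    · rw [dif_pos h]; rfl
    · rw [dif_neg h]; rfl
  right_inv s := by
    rcases s with a | b
    · dsimp only [Sum.elim_inl]
      rw [dif_pos a.2]
    · dsimp only [Sum.elim_inr]
      rw [dif_neg (fun h => Finset.disjoint_left.mp (U0_disjoint hd) h b.2)]

lemma unionSplit_symm_inl {A B : Finset (ZMod τ × Fin n)} (hd : Disjoint A B)
    (a : {x // x ∈ U0 A}) :
    (unionSplit hd).symm (Sum.inl a) =
      ⟨a.1, mem_U0.mpr (mem_union_left _ (mem_U0.mp a.2))⟩ := rfl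

lemma unionSplit_symm_inr {A B : Finset (ZMod τ × Fin n)} (hd : Disjoint A B)
    (b : {x // x ∈ U0 B}) :
    (unionSplit hd).symm (Sum.inr b) =
      ⟨b.1, mem_U0.mpr (mem_union_right _ (mem_U0.mp b.2))⟩ := rfl

lemma unionSplit_apply_of_mem {A B : Finset (ZMod τ × Fin n)} (hd : Disjoint A B)
    (z : {x // x ∈ U0 (A ∪ B)}) (h : z.1 ∈ U0 A) :
    unionSplit hd z = Sum.inl ⟨z.1, h⟩ := by
  simp only [unionSplit, Equiv.coe_fn_mk]
  rw [dif_pos h]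

lemma unionSplit_apply_of_notMem {A B : Finset (ZMod τ × Fin n)} (hd : Disjoint A B)
    (z : {x // x ∈ U0 (A ∪ B)}) (h : ¬ z.1 ∈ U0 A) (h' : z.1 ∈ U0 B) :
    unionSplit hd z = Sum.inr ⟨z.1, h'⟩ := by
  simp only [unionSplit, Equiv.coe_fn_mk]
  rw [dif_neg h]

lemma w_union {A B : Finset (ZMod τ × Fin n)} {u} (hA : condInv A u)
    (hB : condInv B u) (hd : Disjoint A B) : w (A ∪ B) u = w A u * w B u := by
  have hAB : condInv (A ∪ B) u := condInv_union hA hB hd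
  rw [w_of hAB, w_of hA, w_of hB]
  have hcard : (U0 (A ∪ B)).card = (U0 A).card + (U0 B).card := by
    rw [U0_union, Finset.card_union_of_disjoint (U0_disjoint hd)]
  have hsign : Equiv.Perm.sign (rho hAB) =
      Equiv.Perm.sign (rho hA) * Equiv.Perm.sign (rho hB) := by
    have key : (unionSplit hd).permCongr (rho hAB) = (rho hA).sumCongr (rho hB) := by
      apply Equiv.ext
      intro s
      rcases s with a | b
      · rw [Equiv.permCongr_apply, unionSplit_symm_inl hd a]
        have hval : (rho hAB ⟨a.1, mem_U0.mpr (mem_union_left _ (mem_U0.mp a.2))⟩ : Fin n)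
            = Ret u a.1 := rho_apply hAB _
        have hmem : (rho hAB ⟨a.1, mem_U0.mpr (mem_union_left _ (mem_U0.mp a.2))⟩ : Fin n)
            ∈ U0 A := by rw [hval]; exact Ret_mem hA a.2
        rw [unionSplit_apply_of_mem hd _ hmem]
        simp only [Equiv.sumCongr_apply, Sum.map_inl]
        exact congrArg Sum.inl (Subtype.ext hval)
      · rw [Equiv.permCongr_apply, unionSplit_symm_inr hd b]
        have hval : (rho hAB ⟨b.1, mem_U0.mpr (mem_union_right _ (mem_U0.mp b.2))⟩ : Fin n)
            = Ret u b.1 := rho_apply hAB _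
        have hmemB : (rho hAB ⟨b.1, mem_U0.mpr (mem_union_right _ (mem_U0.mp b.2))⟩ : Fin n)
            ∈ U0 B := by rw [hval]; exact Ret_mem hB b.2
        have hmem : ¬ (rho hAB ⟨b.1, mem_U0.mpr (mem_union_right _ (mem_U0.mp b.2))⟩ : Fin n)
            ∈ U0 A := fun h => Finset.disjoint_left.mp (U0_disjoint hd) h hmemB
        rw [unionSplit_apply_of_notMem hd _ hmem hmemB]
        simp only [Equiv.sumCongr_apply, Sum.map_inr]
        exact congrArg Sum.inr (Subtype.ext hval)
    calc Equiv.Perm.sign (rho hAB)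
        = Equiv.Perm.sign ((unionSplit hd).permCongr (rho hAB)) :=
          (Equiv.Perm.sign_permCongr _ _).symm
      _ = _ := by rw [key, Equiv.Perm.sign_sumCongr]
  rw [hcard, hsign]
  push_cast
  ring

/-! ### orbits of periodic points -/

def Orb (u : ZMod τ × Fin n → Fin n) (p : ZMod τ × Fin n) (d : ℕ) :
    Finset (ZMod τ × Fin n) :=
  (range d).image (fun k => (stp u)^[k] p)

variable {u : ZMod τ × Fin n → Fin n} {p : ZMod τ × Fin n} {d : ℕ}

lemma iter_d_mul (hper : (stp u)^[d] p = p) (q : ℕ) : (stp u)^[d * q] p = p := by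
  induction q with
  | zero => simp
  | succ q ih => rw [show d*(q+1) = d*q + d by ring, iterate_add_apply, hper, ih]

lemma iter_mem_Orb (hd : 0 < d) (hper : (stp u)^[d] p = p) (j : ℕ) :
    (stp u)^[j] p ∈ Orb u p d := by
  have h1 : (stp u)^[j] p = (stp u)^[j % d] p := by
    conv_lhs => rw [show j = j % d + d * (j / d) by rw [Nat.mod_add_div]]
    rw [iterate_add_apply, iter_d_mul hper]
  rw [h1]
  exact mem_image_of_mem _ (mem_range.mpr (Nat.mod_lt _ hd))

lemma self_mem_Orb (hd : 0 < d) : p ∈ Orb u p d :=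
  mem_image_of_mem _ (mem_range.mpr hd)

lemma cancel_iter (hper : (stp u)^[d] p = p) (hd : 0 < d) {j l : ℕ}
    (h : (stp u)^[j+1] p = (stp u)^[l+1] p) : (stp u)^[j] p = (stp u)^[l] p := by
  have e1 : ∀ m : ℕ, (stp u)^[m] p = (stp u)^[d-1] ((stp u)^[m+1] p) := by
    intro m
    rw [← iterate_add_apply, show d - 1 + (m+1) = m + d by omega,
      iterate_add_apply, hper]
  rw [e1 j, e1 l, h]

lemma condInv_Orb (hd : 0 < d) (hper : (stp u)^[d] p = p) : condInv (Orb u p d) u := by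
  constructor
  · intro q hq
    rcases mem_image.mp hq with ⟨k, hk, rfl⟩
    have : stp u ((stp u)^[k] p) = (stp u)^[k+1] p := (iterate_succ_apply' _ _ _).symm
    rw [this]
    exact iter_mem_Orb hd hper _
  · intro a ha b hb hab
    simp only [Orb, coe_image, Set.mem_image, mem_coe, mem_range] at ha hb
    obtain ⟨j, hj, rfl⟩ := ha
    obtain ⟨l, hl, rfl⟩ := hb
    have h1 : (stp u)^[j+1] p = (stp u)^[l+1] p := by
      rw [iterate_succ_apply', iterate_succ_apply']; exact hab
    exact cancel_iter hper hd h1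

lemma tau_dvd_period (hper : (stp u)^[d] p = p) : τ ∣ d := by
  have h := stp_iter_fst u p d
  rw [hper] at h
  exact (CharP.cast_eq_zero_iff (ZMod τ) τ d).mp (left_eq_add.mp h)

lemma exists_mem_U0_Orb (hd : 0 < d) (hper : (stp u)^[d] p = p) :
    ∃ x0, x0 ∈ U0 (Orb u p d) := by
  set k0 := τ - (p.1).val with hk0
  have hval : (p.1).val < τ := ZMod.val_lt p.1
  have hfst : ((stp u)^[k0] p).1 = 0 := by
    rw [stp_iter_fst, hk0, Nat.cast_sub (le_of_lt hval), ZMod.natCast_self,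
      zero_sub, ZMod.natCast_rightInverse p.1, add_neg_cancel]
  refine ⟨((stp u)^[k0] p).2, mem_U0.mpr ?_⟩
  have : ((0 : ZMod τ), ((stp u)^[k0] p).2) = (stp u)^[k0] p := by
    exact Prod.ext hfst.symm rfl
  rw [this]
  exact iter_mem_Orb hd hper k0

lemma Ret_reach (hd : 0 < d) (hper : (stp u)^[d] p = p) {z z' : Fin n}
    (hz : z ∈ U0 (Orb u p d)) (hz' : z' ∈ U0 (Orb u p d)) :
    ∃ t : ℕ, (Ret u)^[t] z = z' := by
  rw [mem_U0] at hz hz'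
  simp only [Orb, mem_image, mem_range] at hz hz'
  obtain ⟨j, hj, hjz⟩ := hz
  obtain ⟨l, hl, hlz⟩ := hz'
  set e := l + d - j with he
  have hej : e + j = l + d := by omega
  have h1 : (stp u)^[e] ((0 : ZMod τ), z) = ((0 : ZMod τ), z') := by
    rw [← hjz, ← iterate_add_apply, hej, iterate_add_apply, hper, hlz]
  have hdvd : τ ∣ e := by
    have h2 := stp_iter_fst u ((0 : ZMod τ), z) e
    rw [h1] at h2
    simp only [zero_add] at h2
    exact (CharP.cast_eq_zero_iff (ZMod τ) τ e).mp h2.symm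
  obtain ⟨t, ht⟩ := hdvd
  rw [ht, stp_iter_tau_mul] at h1
  exact ⟨t, (Prod.ext_iff.mp h1).2⟩

lemma w_Orb (hd : 0 < d) (hper : (stp u)^[d] p = p) : w (Orb u p d) u = -1 := by
  have hc := condInv_Orb hd hper
  rw [w_of hc]
  obtain ⟨x0, hx0⟩ := exists_mem_U0_Orb hd hper
  have hcard1 : 1 ≤ (U0 (Orb u p d)).card := Finset.card_pos.mpr ⟨x0, hx0⟩
  have hfin : Fintype.card {x // x ∈ U0 (Orb u p d)} = (U0 (Orb u p d)).card :=
    Fintype.card_coe _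
  rcases eq_or_lt_of_le hcard1 with h1 | h2
  · -- singleton case
    have hsub : Subsingleton {x // x ∈ U0 (Orb u p d)} :=
      Fintype.card_le_one_iff_subsingleton.mp (by rw [hfin, ← h1])
    have hrho : rho hc = 1 := Equiv.ext fun z => Subsingleton.elim _ _
    rw [hrho, ← h1]
    simp
  · -- cycle case
    have hnofix : ∀ y : {x // x ∈ U0 (Orb u p d)}, rho hc y ≠ y := by
      intro y hy
      have hRy : Ret u y.1 = y.1 := congrArg Subtype.val hy
      have hRt : ∀ t : ℕ, (Ret u)^[t] y.1 = y.1 := by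
        intro t
        induction t with
        | zero => rfl
        | succ t ih => rw [iterate_succ_apply', ih, hRy]
      have hall : ∀ z : {x // x ∈ U0 (Orb u p d)}, z = y := by
        intro z
        obtain ⟨t, ht⟩ := Ret_reach hd hper y.2 z.2
        exact Subtype.ext (by rw [← ht, hRt])
      obtain ⟨a, ha, b, hb, hab⟩ := Finset.one_lt_card.mp h2
      exact hab (congrArg Subtype.val ((hall ⟨a, ha⟩).trans (hall ⟨b, hb⟩).symm)) |>.elim
    have hcyc : (rho hc).IsCycle := by
      refine ⟨⟨x0, hx0⟩, hnofix _, fun y _ => ?_⟩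
      obtain ⟨t, ht⟩ := Ret_reach hd hper hx0 y.2
      refine ⟨(t : ℤ), ?_⟩
      rw [zpow_natCast]
      exact Subtype.ext (by rw [rho_pow_apply]; exact ht)
    have hsupp : (rho hc).support = Finset.univ :=
      Finset.eq_univ_iff_forall.mpr fun y => Equiv.Perm.mem_support.mpr (hnofix y)
    have hsign := hcyc.sign
    rw [hsupp, Finset.card_univ, hfin] at hsign
    rw [hsign]
    push_cast
    rw [mul_neg, ← pow_add]
    rw [Even.neg_one_pow ⟨(U0 (Orb u p d)).card, rfl⟩]


/-! ### the `b`-cycle, goodness -/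

def Gcond (b : ZMod τ → Fin n) (u : ZMod τ × Fin n → Fin n) : Prop :=
  ∀ i : ZMod τ, u (i, b i) = b (i + 1)

def good (b : ZMod τ → Fin n) (u : ZMod τ × Fin n → Fin n) : Prop :=
  ∀ p : ZMod τ × Fin n, ∃ m : ℕ, (stp u)^[m] p = ((0 : ZMod τ), b 0)

lemma bcycle_iter {b : ZMod τ → Fin n} (hG : Gcond b u) (i : ZMod τ) (k : ℕ) :
    (stp u)^[k] (i, b i) = (i + k, b (i + k)) := by
  induction k with
  | zero => simp
  | succ k ih =>
    rw [iterate_succ_apply', ih]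
    show (i + (k : ZMod τ) + 1, u (i + k, b (i + k))) = _
    rw [hG (i + k)]
    push_cast
    rw [add_assoc]


lemma good_aux {b : ZMod τ → Fin n} (hG : Gcond b u)
    (hper : ∀ p : ZMod τ × Fin n, ∀ d : ℕ, 0 < d → (stp u)^[d] p = p → p.2 = b p.1)
    (p : ZMod τ × Fin n) (a c : ℕ) (hlt : a < c)
    (h : (stp u)^[a] p = (stp u)^[c] p) :
    ∃ m : ℕ, (stp u)^[m] p = ((0 : ZMod τ), b 0) := by
  set q := (stp u)^[a] p with hq
  have hd : 0 < c - a := by omega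
  have hper' : (stp u)^[c - a] q = q := by
    rw [hq, ← iterate_add_apply, show c - a + a = c by omega]
    exact h.symm
  have hq2 : q.2 = b q.1 := hper q (c - a) hd hper'
  have hqe : q = (q.1, b q.1) := Prod.ext rfl hq2
  set k0 := τ - (q.1).val with hk0
  have hval : (q.1).val < τ := ZMod.val_lt q.1
  have hcast : (q.1 + (k0 : ZMod τ)) = 0 := by
    rw [hk0, Nat.cast_sub (le_of_lt hval), ZMod.natCast_self, zero_sub,
      ZMod.natCast_rightInverse q.1, add_neg_cancel]
  refine ⟨k0 + a, ?_⟩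
  rw [iterate_add_apply, ← hq, hqe, bcycle_iter hG, hcast]

lemma good_iff {b : ZMod τ → Fin n} (hG : Gcond b u) :
    good b u ↔ ∀ p : ZMod τ × Fin n, ∀ d : ℕ, 0 < d → (stp u)^[d] p = p → p.2 = b p.1 := by
  constructor
  · intro hg p d hd hper
    obtain ⟨m, hm⟩ := hg p
    set t := d * (m + 1) with ht
    have htm : m ≤ t := by
      calc m ≤ m + 1 := Nat.le_succ m
        _ ≤ d * (m + 1) := Nat.le_mul_of_pos_left _ hd
    have h1 : p = (stp u)^[t - m] ((0 : ZMod τ), b 0) := by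
      rw [← hm, ← iterate_add_apply, show t - m + m = t by omega, ht, iter_d_mul hper]
    have h2 := bcycle_iter hG 0 (t - m)
    rw [← h1] at h2
    rw [h2]
  · intro hper p
    obtain ⟨a, c, hac, h⟩ := Finite.exists_ne_map_eq_of_infinite (fun k : ℕ => (stp u)^[k] p)
    rcases Nat.lt_or_ge a c with hlt | hge
    case _ => exact good_aux hG hper p a c hlt h
    case _ => exact good_aux hG hper p c a (by omega) h.symm


/-! ### Lemma A -/

noncomputable def allU (b : ZMod τ → Fin n) : Finset (Finset (ZMod τ × Fin n)) :=
  univ.filter (fun U => ∀ p ∈ U, p.2 ≠ b p.1)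

lemma mem_allU {b : ZMod τ → Fin n} {U : Finset (ZMod τ × Fin n)} :
    U ∈ allU b ↔ ∀ p ∈ U, p.2 ≠ b p.1 := by simp [allU]

lemma condInv_empty : condInv (∅ : Finset (ZMod τ × Fin n)) u :=
  ⟨fun p hp => absurd hp (Finset.notMem_empty p), by simp⟩

lemma w_empty : w (∅ : Finset (ZMod τ × Fin n)) u = 1 := by
  rw [w_of condInv_empty]
  have hU0 : U0 (∅ : Finset (ZMod τ × Fin n)) = ∅ := by
    ext x; simp [mem_U0]
  have hsub : Subsingleton {x // x ∈ U0 (∅ : Finset (ZMod τ × Fin n))} :=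
    Fintype.card_le_one_iff_subsingleton.mp (by rw [Fintype.card_coe, hU0]; simp)
  have hrho : rho (condInv_empty (u := u)) = 1 := Equiv.ext fun z => Subsingleton.elim _ _
  rw [hrho, hU0]
  simp

lemma U_subset_per {U : Finset (ZMod τ × Fin n)} (hc : condInv U u) {q} (hq : q ∈ U) :
    ∃ d, 0 < d ∧ (stp u)^[d] q = q := by
  have key : ∀ a c : ℕ, a < c → (stp u)^[a] q = (stp u)^[c] q →
      ∃ d, 0 < d ∧ (stp u)^[d] q = q := by
    intro a c hlt h
    have h2 : (stp u)^[a] ((stp u)^[c-a] q) = (stp u)^[a] q := by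
      rw [← iterate_add_apply, show a + (c-a) = c by omega]
      exact h.symm
    exact ⟨c - a, by omega,
      iter_injOn hc a (mem_coe.mpr (iter_mem hc hq (c-a))) (mem_coe.mpr hq) h2⟩
  obtain ⟨a, c, hac, h⟩ := Finite.exists_ne_map_eq_of_infinite (fun k : ℕ => (stp u)^[k] q)
  rcases Nat.lt_or_ge a c with hlt | hge
  · exact key a c hlt h
  · exact key c a (by omega) h.symm

lemma Orb_subset_of_mem (hd : 0 < d) (hper : (stp u)^[d] p = p)
    {U : Finset (ZMod τ × Fin n)} (hc : condInv U u) {q} (hqU : q ∈ U)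
    (hqO : q ∈ Orb u p d) : Orb u p d ⊆ U := by
  intro x hx
  simp only [Orb, mem_image, mem_range] at hx hqO
  obtain ⟨l, hl, rfl⟩ := hx
  obtain ⟨k, hk, hkq⟩ := hqO
  have hrep : (stp u)^[l] p = (stp u)^[l + d - k] q := by
    rw [← hkq, ← iterate_add_apply, show l + d - k + k = l + d by omega,
      iterate_add_apply, hper]
  rw [hrep]
  exact iter_mem hc hqU _

lemma stp_surjOn_Orb (hd : 0 < d) (hper : (stp u)^[d] p = p) :
    ∀ y ∈ Orb u p d, ∃ x ∈ Orb u p d, stp u x = y := by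
  have hc := condInv_Orb hd hper
  intro y hy
  obtain ⟨x, hx, hxy⟩ := Finset.surj_on_of_inj_on_of_card_le (fun a _ => stp u a)
    (fun a ha => hc.1 a ha) (fun a₁ a₂ h₁ h₂ he => hc.2 (mem_coe.mpr h₁) (mem_coe.mpr h₂) he)
    le_rfl y hy
  exact ⟨x, hx, hxy.symm⟩

lemma condInv_sdiff (hd : 0 < d) (hper : (stp u)^[d] p = p)
    {U : Finset (ZMod τ × Fin n)} (hc : condInv U u) (hO : Orb u p d ⊆ U) :
    condInv (U \ Orb u p d) u := by
  constructor
  · intro x hx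
    have hxU := (mem_sdiff.mp hx).1
    have hxO := (mem_sdiff.mp hx).2
    rw [mem_sdiff]
    refine ⟨hc.1 x hxU, fun hfx => ?_⟩
    obtain ⟨y, hy, hyx⟩ := stp_surjOn_Orb hd hper _ hfx
    have hxy : y = x := hc.2 (mem_coe.mpr (hO hy)) (mem_coe.mpr hxU) hyx
    exact hxO (hxy ▸ hy)
  · exact hc.2.mono (Finset.coe_subset.mpr (Finset.sdiff_subset))

lemma Orb_avoid {b : ZMod τ → Fin n} (hG : Gcond b u) (hd : 0 < d)
    (hper : (stp u)^[d] p = p) (hpb : p.2 ≠ b p.1) :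
    ∀ q ∈ Orb u p d, q.2 ≠ b q.1 := by
  intro q hq hqb
  simp only [Orb, mem_image, mem_range] at hq
  obtain ⟨j, hj, hjq⟩ := hq
  have hqe : q = (q.1, b q.1) := Prod.ext rfl hqb
  have hback : (stp u)^[d - j] q = p := by
    rw [← hjq, ← iterate_add_apply, show d - j + j = d by omega, hper]
  rw [hqe, bcycle_iter hG] at hback
  have h1 := (Prod.ext_iff.mp hback).1
  have h2 := (Prod.ext_iff.mp hback).2
  exact hpb (by rw [← h1]; exact h2.symm)

lemma lemA {b : ZMod τ → Fin n} (hG : Gcond b u) :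
    ∑ U ∈ allU b, w U u = if good b u then 1 else 0 := by
  by_cases hg : good b u
  · rw [if_pos hg]
    rw [Finset.sum_eq_single (∅ : Finset (ZMod τ × Fin n))]
    · exact w_empty
    · intro U hU hUne
      by_contra hw
      have hc : condInv U u := by
        by_contra hcc; exact hw (w_of_not hcc)
      obtain ⟨q, hq⟩ := Finset.nonempty_iff_ne_empty.mpr hUne
      obtain ⟨d, hd, hper⟩ := U_subset_per hc hq
      exact (mem_allU.mp hU q hq) ((good_iff hG).mp hg q d hd hper)
    · intro h
      exact absurd (mem_allU.mpr (fun p hp => absurd hp (Finset.notMem_empty p))) h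
  · rw [if_neg hg]
    have hg' := hg
    rw [good_iff hG] at hg'
    push_neg at hg'
    obtain ⟨p, d, hd, hper, hpb⟩ := hg'
    have hOav : ∀ q ∈ Orb u p d, q.2 ≠ b q.1 := Orb_avoid hG hd hper hpb
    have hOne : (Orb u p d).Nonempty := ⟨p, self_mem_Orb hd⟩
    have hcO : condInv (Orb u p d) u := condInv_Orb hd hper
    have key1 : ∀ U : Finset (ZMod τ × Fin n), condInv U u → (U ∩ Orb u p d).Nonempty →
        Orb u p d ⊆ U := by
      rintro U hc ⟨q, hq⟩
      exact Orb_subset_of_mem hd hper hc (mem_inter.mp hq).1 (mem_inter.mp hq).2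
    have key2 : ∀ U : Finset (ZMod τ × Fin n), Disjoint U (Orb u p d) →
        condInv (U ∪ Orb u p d) u → condInv U u := by
      intro U hdis hc
      constructor
      · intro x hx
        have hfx : stp u x ∈ U ∪ Orb u p d := hc.1 x (mem_union_left _ hx)
        rcases mem_union.mp hfx with h | h
        · exact h
        · obtain ⟨y, hy, hyx⟩ := stp_surjOn_Orb hd hper _ h
          have hxy : x = y := hc.2 (by simp [hx]) (by simp [hy]) hyx.symm
          exact (Finset.disjoint_left.mp hdis hx (show x ∈ Orb u p d by rw [hxy]; exact hy)).elim
      · exact hc.2.mono (Finset.coe_subset.mpr Finset.subset_union_left)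
    refine Finset.sum_involution
      (fun U _ => if Orb u p d ⊆ U then U \ Orb u p d else
        (if (U ∩ Orb u p d).Nonempty then U else U ∪ Orb u p d)) ?_ ?_ ?_ ?_
    · -- sums to zero
      intro U hU
      by_cases h1 : Orb u p d ⊆ U
      · simp only [if_pos h1]
        have hUeq : (U \ Orb u p d) ∪ Orb u p d = U := Finset.sdiff_union_of_subset h1
        have hdis : Disjoint (U \ Orb u p d) (Orb u p d) := Finset.sdiff_disjoint
        by_cases h2 : condInv (U \ Orb u p d) u
        · have hw := w_union h2 hcO hdis
          rw [hUeq] at hw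
          rw [hw, w_Orb hd hper]
          ring
        · have h3 : ¬ condInv U u := fun hcU => h2 (condInv_sdiff hd hper hcU h1)
          rw [w_of_not h2, w_of_not h3]
          norm_num
      · simp only [if_neg h1]
        by_cases h2 : (U ∩ Orb u p d).Nonempty
        · simp only [if_pos h2]
          have h3 : ¬ condInv U u := fun hc => h1 (key1 U hc h2)
          rw [w_of_not h3]
          norm_num
        · simp only [if_neg h2]
          have hdis : Disjoint U (Orb u p d) := by
            rw [Finset.disjoint_left]
            intro a ha ha'
            exact h2 ⟨a, mem_inter.mpr ⟨ha, ha'⟩⟩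
          by_cases h3 : condInv U u
          · rw [w_union h3 hcO hdis, w_Orb hd hper]
            ring
          · rw [w_of_not h3, w_of_not (fun hc => h3 (key2 U hdis hc))]
            norm_num
    · -- nonzero terms move
      intro U hU hw
      have hc : condInv U u := by
        by_contra hcc; exact hw (w_of_not hcc)
      by_cases h1 : Orb u p d ⊆ U
      · simp only [if_pos h1]
        intro heq
        obtain ⟨q, hq⟩ := hOne
        have : q ∈ U \ Orb u p d := by rw [heq]; exact h1 hq
        exact (mem_sdiff.mp this).2 hq
      · have h2 : ¬ (U ∩ Orb u p d).Nonempty := fun h2 => h1 (key1 U hc h2)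
        simp only [if_neg h1, if_neg h2]
        intro heq
        obtain ⟨q, hq⟩ := hOne
        have : q ∈ U := by rw [← heq]; exact mem_union_right U hq
        exact h2 ⟨q, mem_inter.mpr ⟨this, hq⟩⟩
    · -- stays in allU
      intro U hU
      split_ifs with h1 h2
      · exact mem_allU.mpr (fun q hq => mem_allU.mp hU q (mem_sdiff.mp hq).1)
      · exact hU
      · exact mem_allU.mpr (fun q hq => (mem_union.mp hq).elim (mem_allU.mp hU q) (hOav q))
    · -- involution
      intro U hU
      by_cases h1 : Orb u p d ⊆ U
      · have hx1 : ¬ Orb u p d ⊆ U \ Orb u p d := by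
          intro hsub
          obtain ⟨q, hq⟩ := hOne
          exact (mem_sdiff.mp (hsub hq)).2 hq
        have hx2 : ¬ ((U \ Orb u p d) ∩ Orb u p d).Nonempty := by
          rintro ⟨q, hq⟩
          exact (mem_sdiff.mp (mem_inter.mp hq).1).2 (mem_inter.mp hq).2
        simp only [if_pos h1, if_neg hx1, if_neg hx2]
        exact Finset.sdiff_union_of_subset h1
      · by_cases h2 : (U ∩ Orb u p d).Nonempty
        · simp only [if_neg h1, if_pos h2]
        · have hdis : Disjoint U (Orb u p d) := by
            rw [Finset.disjoint_left]
            intro a ha ha'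
            exact h2 ⟨a, mem_inter.mpr ⟨ha, ha'⟩⟩
          have hy1 : Orb u p d ⊆ U ∪ Orb u p d := Finset.subset_union_right
          simp only [if_neg h1, if_neg h2, if_pos hy1]
          ext x
          simp only [mem_sdiff, mem_union]
          constructor
          · rintro ⟨h | h, hn⟩
            · exact h
            · exact absurd h hn
          · intro hx
            exact ⟨Or.inl hx, fun hcn => Finset.disjoint_left.mp hdis hx hcn⟩


/-! ### counting functions with prescribed values -/

lemma card_V : Fintype.card (ZMod τ × Fin n) = τ * n := by
  rw [Fintype.card_prod, ZMod.card, Fintype.card_fin]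

noncomputable def presEquiv (S : Finset (ZMod τ × Fin n)) (f0 : ZMod τ × Fin n → Fin n) :
    {u : ZMod τ × Fin n → Fin n // ∀ p ∈ S, u p = f0 p} ≃
      ({p : ZMod τ × Fin n // p ∉ S} → Fin n) where
  toFun u q := u.1 q.1
  invFun h := ⟨fun p => if hp : p ∈ S then f0 p else h ⟨p, hp⟩, fun p hp => dif_pos hp⟩
  left_inv u := by
    apply Subtype.ext
    funext p
    by_cases hp : p ∈ S
    · exact (dif_pos hp).trans (u.2 p hp).symm
    · exact dif_neg hp
  right_inv h := by
    funext q
    exact dif_neg q.2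

lemma card_prescribed (S : Finset (ZMod τ × Fin n)) (f0 : ZMod τ × Fin n → Fin n) :
    ((univ : Finset (ZMod τ × Fin n → Fin n)).filter (fun u => ∀ p ∈ S, u p = f0 p)).card
      = n ^ (τ * n - S.card) := by
  rw [← Fintype.card_subtype]
  rw [Fintype.card_congr (presEquiv S f0)]
  rw [Fintype.card_fun]
  congr 1
  · exact Fintype.card_fin n
  · rw [Fintype.card_subtype_compl, card_V, Fintype.card_coe]

def bC (b : ZMod τ → Fin n) : Finset (ZMod τ × Fin n) :=
  univ.image (fun i => (i, b i))

lemma mem_bC {b : ZMod τ → Fin n} {p : ZMod τ × Fin n} :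
    p ∈ bC b ↔ p.2 = b p.1 := by
  simp only [bC, mem_image, mem_univ, true_and]
  constructor
  · rintro ⟨i, rfl⟩; rfl
  · intro h; exact ⟨p.1, (show p = (p.1, b p.1) from Prod.ext rfl h).symm⟩

lemma card_bC {b : ZMod τ → Fin n} : (bC b).card = τ := by
  rw [bC, Finset.card_image_of_injective _ (fun i j h => (Prod.ext_iff.mp h).1),
    card_univ, ZMod.card]

lemma fiber_card {b : ZMod τ → Fin n} {U : Finset (ZMod τ × Fin n)}
    (hav : ∀ p ∈ U, p.2 ≠ b p.1) (v : ZMod τ × Fin n → Fin n) :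
    (((univ : Finset (ZMod τ × Fin n → Fin n)).filter (Gcond b)).filter
        (fun u => ∀ p ∈ U, u p = v p)).card = n ^ (τ * n - τ - U.card) := by
  have hdis : Disjoint (bC b) U := by
    rw [Finset.disjoint_left]
    intro p hp hp'
    exact hav p hp' (mem_bC.mp hp)
  set f0 : ZMod τ × Fin n → Fin n := fun p => if p ∈ U then v p else b (p.1 + 1) with hf0
  have hiff : ∀ u : ZMod τ × Fin n → Fin n,
      (Gcond b u ∧ ∀ p ∈ U, u p = v p) ↔ (∀ p ∈ bC b ∪ U, u p = f0 p) := by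
    intro u
    constructor
    · rintro ⟨hg, hv⟩ p hp
      by_cases hpU : p ∈ U
      · rw [hf0]; simp only [if_pos hpU]; exact hv p hpU
      · have hpb : p ∈ bC b := (mem_union.mp hp).resolve_right hpU
        rw [hf0]; simp only [if_neg hpU]
        have : p = (p.1, b p.1) := Prod.ext rfl (mem_bC.mp hpb)
        rw [this]
        exact hg p.1
    · intro hall
      constructor
      · intro i
        have hmem : ((i, b i) : ZMod τ × Fin n) ∈ bC b ∪ U :=
          mem_union_left _ (mem_bC.mpr rfl)
        have hnU : ((i, b i) : ZMod τ × Fin n) ∉ U := fun h => hav _ h rfl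
        have := hall _ hmem
        rw [hf0] at this
        simp only [if_neg hnU] at this
        exact this
      · intro p hp
        have := hall p (mem_union_right _ hp)
        rw [hf0] at this
        simpa only [if_pos hp] using this
  rw [Finset.filter_filter]
  have : ((univ : Finset (ZMod τ × Fin n → Fin n)).filter
      (fun u => Gcond b u ∧ ∀ p ∈ U, u p = v p)) =
      ((univ : Finset (ZMod τ × Fin n → Fin n)).filter
      (fun u => ∀ p ∈ bC b ∪ U, u p = f0 p)) := by
    apply Finset.filter_congr
    intro u _
    exact iff_iff_eq.mp (hiff u) ▸ Iff.rfl
  rw [this, card_prescribed, Finset.card_union_of_disjoint hdis, card_bC]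
  congr 1
  omega


/-! ### layer structure -/

def layerSet (U : Finset (ZMod τ × Fin n)) (i : ZMod τ) : Finset (Fin n) :=
  univ.filter (fun x => (i, x) ∈ U)

lemma layerSet_zero {U : Finset (ZMod τ × Fin n)} : layerSet U 0 = U0 U := rfl

lemma mem_layerSet {U : Finset (ZMod τ × Fin n)} {i : ZMod τ} {x : Fin n} :
    x ∈ layerSet U i ↔ (i, x) ∈ U := by simp [layerSet]

lemma stp_surjOn {U : Finset (ZMod τ × Fin n)} {v} (hc : condInv U v) :
    ∀ q ∈ U, ∃ r ∈ U, stp v r = q := by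
  intro q hq
  obtain ⟨r, hr, hrq⟩ := Finset.surj_on_of_inj_on_of_card_le (fun a _ => stp v a)
    (fun a ha => hc.1 a ha) (fun a₁ a₂ h₁ h₂ he => hc.2 (mem_coe.mpr h₁) (mem_coe.mpr h₂) he)
    le_rfl q hq
  exact ⟨r, hr, hrq.symm⟩

lemma layer_card_eq {U : Finset (ZMod τ × Fin n)} {v} (hc : condInv U v) (i : ZMod τ) :
    (layerSet U i).card = (layerSet U (i + 1)).card := by
  apply Finset.card_bij (fun x _ => v (i, x))
  · intro x hx
    rw [mem_layerSet]
    exact hc.1 (i, x) (mem_layerSet.mp hx)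
  · intro x₁ h₁ x₂ h₂ he
    have := hc.2 (mem_coe.mpr (mem_layerSet.mp h₁)) (mem_coe.mpr (mem_layerSet.mp h₂))
      (show stp v (i, x₁) = stp v (i, x₂) from Prod.ext rfl he)
    exact (Prod.ext_iff.mp this).2
  · intro y hy
    obtain ⟨r, hr, hrq⟩ := stp_surjOn hc (i + 1, y) (mem_layerSet.mp hy)
    have h1' : r.1 + 1 = i + 1 := (Prod.ext_iff.mp hrq).1
    have h1 : r.1 = i := add_right_cancel h1'
    have hre : r = (i, r.2) := Prod.ext h1 rfl
    refine ⟨r.2, mem_layerSet.mpr (by rw [← hre]; exact hr), ?_⟩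
    have h2 : v r = y := (Prod.ext_iff.mp hrq).2
    rw [← hre]
    exact h2

lemma layer_card_all {U : Finset (ZMod τ × Fin n)} {v} (hc : condInv U v) (i : ZMod τ) :
    (layerSet U i).card = (U0 U).card := by
  have key : ∀ k : ℕ, (layerSet U (k : ZMod τ)).card = (U0 U).card := by
    intro k
    induction k with
    | zero => rw [Nat.cast_zero, layerSet_zero]
    | succ k ih => rw [Nat.cast_succ, ← layer_card_eq hc, ih]
  have := key i.val
  rwa [ZMod.natCast_rightInverse i] at this

lemma card_U_eq {U : Finset (ZMod τ × Fin n)} {v} (hc : condInv U v) :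
    U.card = τ * (U0 U).card := by
  rw [Finset.card_eq_sum_card_fiberwise (f := Prod.fst) (t := univ) (fun p _ => mem_univ _)]
  have key : ∀ i : ZMod τ, (U.filter (fun p => p.1 = i)).card = (U0 U).card := by
    intro i
    rw [← layer_card_all hc i]
    apply Finset.card_bij (fun p _ => p.2)
    · intro p hp
      rw [mem_layerSet]
      have h1 := (mem_filter.mp hp).2
      have h2 := (mem_filter.mp hp).1
      rwa [show (i, p.2) = p from Prod.ext h1.symm rfl]
    · intro p₁ h₁ p₂ h₂ he
      have e1 := (mem_filter.mp h₁).2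
      have e2 := (mem_filter.mp h₂).2
      exact Prod.ext (e1.trans e2.symm) he
    · intro x hx
      exact ⟨(i, x), mem_filter.mpr ⟨mem_layerSet.mp hx, rfl⟩, rfl⟩
  rw [Finset.sum_congr rfl (fun i _ => key i), Finset.sum_const, card_univ, ZMod.card,
    smul_eq_mul]

lemma U0_nonempty_of_ne {U : Finset (ZMod τ × Fin n)} {v} (hc : condInv U v)
    (hne : U.Nonempty) : (U0 U).Nonempty := by
  obtain ⟨p, hp⟩ := hne
  have h1 : p.2 ∈ layerSet U p.1 := mem_layerSet.mpr (by rwa [show (p.1, p.2) = p from rfl])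
  have h2 : 0 < (layerSet U p.1).card := Finset.card_pos.mpr ⟨p.2, h1⟩
  rw [layer_card_all hc] at h2
  exact Finset.card_pos.mp h2

lemma section_of_card_one {U : Finset (ZMod τ × Fin n)} {v} (hc : condInv U v)
    (h1 : (U0 U).card = 1) :
    ∃ c : ZMod τ → Fin n, U = univ.image (fun i => (i, c i)) := by
  have h2 : ∀ i : ZMod τ, ∃ a, layerSet U i = {a} := by
    intro i
    exact Finset.card_eq_one.mp ((layer_card_all hc i).trans h1)
  choose c hcc using h2
  refine ⟨c, ?_⟩
  ext p
  simp only [mem_image, mem_univ, true_and]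
  constructor
  · intro hp
    have : p.2 ∈ layerSet U p.1 := mem_layerSet.mpr (by rwa [show (p.1, p.2) = p from rfl])
    rw [hcc p.1, Finset.mem_singleton] at this
    exact ⟨p.1, Prod.ext rfl this.symm⟩
  · rintro ⟨i, rfl⟩
    have : c i ∈ layerSet U i := by rw [hcc i]; exact Finset.mem_singleton_self _
    exact mem_layerSet.mp this


/-! ### swap involution -/

def eMap (x y : Fin n) : ZMod τ × Fin n → ZMod τ × Fin n :=
  fun q => if q.1 = 0 then (q.1, Equiv.swap x y q.2) else q

lemma eMap_fst (x y : Fin n) (q : ZMod τ × Fin n) : (eMap x y q).1 = q.1 := by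
  unfold eMap; split_ifs <;> rfl

lemma eMap_inj (x y : Fin n) : Function.Injective (eMap (τ := τ) x y) := by
  intro q q' h
  have hf : q.1 = q'.1 := by rw [← eMap_fst x y q, ← eMap_fst x y q', h]
  unfold eMap at h
  by_cases h0 : q.1 = 0
  · have h0' : q'.1 = 0 := by rw [← hf]; exact h0
    rw [if_pos h0, if_pos h0'] at h
    have h2 := (Prod.ext_iff.mp h).2
    exact Prod.ext hf ((Equiv.swap x y).injective h2)
  · have h0' : ¬ q'.1 = 0 := fun hh => h0 (by rw [hf]; exact hh)
    rw [if_neg h0, if_neg h0'] at h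
    exact h

lemma swap_mem_U0 {U : Finset (ZMod τ × Fin n)} {x y : Fin n} (hx : x ∈ U0 U)
    (hy : y ∈ U0 U) {z} (hz : z ∈ U0 U) : Equiv.swap x y z ∈ U0 U := by
  rw [Equiv.swap_apply_def]
  split_ifs <;> assumption

lemma eMap_mem {U : Finset (ZMod τ × Fin n)} {x y : Fin n} (hx : x ∈ U0 U)
    (hy : y ∈ U0 U) {q} (hq : q ∈ U) : eMap x y q ∈ U := by
  unfold eMap
  split_ifs with h0
  · have hq0 : q.2 ∈ U0 U := mem_U0.mpr (by rw [← h0]; exact hq)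
    have h2 := swap_mem_U0 hx hy hq0
    rw [h0]
    exact mem_U0.mp h2
  · exact hq

def phi (x y : Fin n) (U : Finset (ZMod τ × Fin n)) (v : ZMod τ × Fin n → Fin n) :
    ZMod τ × Fin n → Fin n :=
  fun p => if p.1 = (-1 : ZMod τ) ∧ p ∈ U then Equiv.swap x y (v p) else v p

lemma phi_phi (x y : Fin n) (U : Finset (ZMod τ × Fin n)) (v : ZMod τ × Fin n → Fin n) :
    phi x y U (phi x y U v) = v := by
  funext p
  unfold phi
  by_cases h : p.1 = (-1 : ZMod τ) ∧ p ∈ U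
  · rw [if_pos h, if_pos h, Equiv.swap_apply_self]
  · rw [if_neg h, if_neg h]

lemma stp_phi {x y : Fin n} {U : Finset (ZMod τ × Fin n)} {v} {p : ZMod τ × Fin n}
    (hp : p ∈ U) : stp (phi x y U v) p = eMap x y (stp v p) := by
  unfold stp phi eMap
  by_cases h : p.1 = (-1 : ZMod τ)
  · have h1 : p.1 + 1 = 0 := by rw [h]; ring
    simp only [if_pos (And.intro h hp), if_pos h1]
  · have h1 : ¬ (p.1 + 1 = 0) := fun hh => h (eq_neg_of_add_eq_zero_left hh)
    simp only [if_neg (fun hh : _ ∧ _ => h hh.1), if_neg h1]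

lemma condInv_phi {x y : Fin n} {U : Finset (ZMod τ × Fin n)} {v} (hx : x ∈ U0 U)
    (hy : y ∈ U0 U) (hc : condInv U v) : condInv U (phi x y U v) := by
  constructor
  · intro p hp
    rw [stp_phi hp]
    exact eMap_mem hx hy (hc.1 p hp)
  · intro a ha hb hbb hab
    rw [stp_phi (mem_coe.mp ha), stp_phi (mem_coe.mp hbb)] at hab
    exact hc.2 ha hbb (eMap_inj x y hab)

lemma Ret_phi {x y : Fin n} {U : Finset (ZMod τ × Fin n)} {v} (hx : x ∈ U0 U)
    (hy : y ∈ U0 U) (hc : condInv U v) {z} (hz : z ∈ U0 U) :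
    Ret (phi x y U v) z = Equiv.swap x y (Ret v z) := by
  have hτ : 1 ≤ τ := Nat.pos_of_ne_zero (NeZero.ne τ)
  have claim1 : ∀ k, k ≤ τ - 1 →
      (stp (phi x y U v))^[k] ((0 : ZMod τ), z) = (stp v)^[k] ((0 : ZMod τ), z) := by
    intro k hk
    induction k with
    | zero => rfl
    | succ k ih =>
      have hk' : k ≤ τ - 1 := by omega
      rw [iterate_succ_apply', iterate_succ_apply', ih hk']
      set q := (stp v)^[k] ((0 : ZMod τ), z) with hq
      have hqU : q ∈ U := iter_mem hc (mem_U0.mp hz) k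
      have hq1 : q.1 = (k : ZMod τ) := by rw [hq, stp_iter_fst]; ring
      have hne : ¬ (q.1 = (-1 : ZMod τ) ∧ q ∈ U) := by
        rintro ⟨hq2, -⟩
        rw [hq1] at hq2
        have hcast : ((k + 1 : ℕ) : ZMod τ) = 0 := by push_cast; rw [hq2]; ring
        have hdvd := (CharP.cast_eq_zero_iff (ZMod τ) τ _).mp hcast
        have := Nat.le_of_dvd (by omega) hdvd
        omega
      exact Prod.ext rfl (if_neg hne)
  have hqU : (stp v)^[τ - 1] ((0 : ZMod τ), z) ∈ U := iter_mem hc (mem_U0.mp hz) _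
  have hq1 : ((stp v)^[τ-1] ((0 : ZMod τ), z)).1 = (-1 : ZMod τ) := by
    rw [stp_iter_fst]
    have hcast : ((τ - 1 : ℕ) : ZMod τ) + 1 = 0 := by
      have h2 : ((τ - 1 : ℕ) : ZMod τ) + 1 = ((τ - 1 + 1 : ℕ) : ZMod τ) := by push_cast; ring
      rw [h2, show τ - 1 + 1 = τ by omega, ZMod.natCast_self]
    rw [zero_add]
    exact eq_neg_of_add_eq_zero_left hcast
  have hsplit : (stp (phi x y U v))^[τ] ((0 : ZMod τ), z)
      = stp (phi x y U v) ((stp v)^[τ-1] ((0 : ZMod τ), z)) := by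
    have e1 : (stp (phi x y U v))^[τ] ((0 : ZMod τ), z)
        = (stp (phi x y U v))^[τ-1+1] ((0 : ZMod τ), z) := by
      rw [show τ - 1 + 1 = τ by omega]
    rw [e1, iterate_succ_apply', claim1 (τ-1) le_rfl]
  have hv : stp v ((stp v)^[τ-1] ((0 : ZMod τ), z)) = (0, Ret v z) := by
    have e2 := iterate_succ_apply' (stp v) (τ-1) ((0 : ZMod τ), z)
    simp only [Nat.succ_eq_add_one] at e2
    rw [show τ - 1 + 1 = τ by omega, stp_iter_tau] at e2
    exact e2.symm
  have hvval : v ((stp v)^[τ-1] ((0 : ZMod τ), z)) = Ret v z := (Prod.ext_iff.mp hv).2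
  show ((stp (phi x y U v))^[τ] ((0 : ZMod τ), z)).2 = _
  rw [hsplit]
  show (phi x y U v) ((stp v)^[τ-1] ((0 : ZMod τ), z)) = _
  unfold phi
  rw [if_pos ⟨hq1, hqU⟩, hvval]

lemma rho_phi {x y : Fin n} {U : Finset (ZMod τ × Fin n)} {v} (hx : x ∈ U0 U)
    (hy : y ∈ U0 U) (hc : condInv U v) :
    rho (condInv_phi hx hy hc) = Equiv.swap ⟨x, hx⟩ ⟨y, hy⟩ * rho hc := by
  apply Equiv.ext
  intro z
  apply Subtype.ext
  rw [Equiv.Perm.mul_apply]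
  have hl : ((rho (condInv_phi hx hy hc)) z : Fin n) = Ret (phi x y U v) z.1 :=
    rho_apply _ z
  rw [hl, Ret_phi hx hy hc z.2]
  set wz := rho hc z with hwz
  have hwval : (wz : Fin n) = Ret v z.1 := rho_apply hc z
  rw [← hwval]
  by_cases h1 : (wz : Fin n) = x
  · have he : wz = ⟨x, hx⟩ := Subtype.ext h1
    rw [he]
    simp [Equiv.swap_apply_left]
  · by_cases h2 : (wz : Fin n) = y
    · have he : wz = ⟨y, hy⟩ := Subtype.ext h2
      rw [he]
      simp [Equiv.swap_apply_right]
    · rw [Equiv.swap_apply_of_ne_of_ne h1 h2,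
        Equiv.swap_apply_of_ne_of_ne (fun hh => h1 (congrArg Subtype.val hh))
          (fun hh => h2 (congrArg Subtype.val hh))]

noncomputable def RepU (b : ZMod τ → Fin n) (U : Finset (ZMod τ × Fin n)) :
    Finset ((ZMod τ × Fin n) → Fin n) :=
  univ.filter (fun v => ∀ p ∉ U, v p = b 0)

lemma T_zero {b : ZMod τ → Fin n} {U : Finset (ZMod τ × Fin n)} {x y : Fin n}
    (hx : x ∈ U0 U) (hy : y ∈ U0 U) (hxy : x ≠ y) :
    ∑ v ∈ RepU b U, w U v = 0 := by
  refine Finset.sum_involution (fun v _ => phi x y U v) ?_ ?_ ?_ ?_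
  · intro v hv
    by_cases hc : condInv U v
    · rw [w_of hc, w_of (condInv_phi hx hy hc), rho_phi hx hy hc]
      rw [Equiv.Perm.sign_mul, Equiv.Perm.sign_swap
        (fun hh => hxy (congrArg Subtype.val hh))]
      push_cast
      ring
    · have hcp : ¬ condInv U (phi x y U v) := fun hcc => hc (by
        have h3 := condInv_phi hx hy hcc
        rwa [phi_phi] at h3)
      rw [w_of_not hc, w_of_not hcp]
      norm_num
  · intro v hv hw
    have hc : condInv U v := by
      by_contra hcc; exact hw (w_of_not hcc)
    obtain ⟨q, hqU, hq⟩ := stp_surjOn hc ((0 : ZMod τ), x) (mem_U0.mp hx)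
    have hq1 : q.1 = (-1 : ZMod τ) := eq_neg_of_add_eq_zero_left (Prod.ext_iff.mp hq).1
    have hq2 : v q = x := (Prod.ext_iff.mp hq).2
    intro heq
    have hcf : phi x y U v q = v q := congrFun heq q
    have hval : phi x y U v q = Equiv.swap x y (v q) := if_pos ⟨hq1, hqU⟩
    rw [hval, hq2, Equiv.swap_apply_left] at hcf
    exact hxy hcf.symm
  · intro v hv
    simp only [RepU, mem_filter, mem_univ, true_and] at hv ⊢
    intro p hp
    have hval : phi x y U v p = v p := if_neg (fun hh => hp hh.2)
    rw [hval]
    exact hv p hp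
  · intro v hv
    exact phi_phi x y U v


/-! ### sections -/

lemma bC_nonempty {c : ZMod τ → Fin n} : (bC c).Nonempty :=
  ⟨(0, c 0), mem_bC.mpr rfl⟩

lemma U0_bC {c : ZMod τ → Fin n} : U0 (bC c) = {c 0} := by
  ext x
  rw [mem_U0, mem_bC, Finset.mem_singleton]

noncomputable def secV (b c : ZMod τ → Fin n) : (ZMod τ × Fin n) → Fin n :=
  fun p => if p ∈ bC c then c (p.1 + 1) else b 0

lemma secV_mem_RepU {b c : ZMod τ → Fin n} : secV b c ∈ RepU b (bC c) := by
  simp only [RepU, mem_filter, mem_univ, true_and]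
  intro p hp
  exact if_neg hp

lemma condInv_secV {b c : ZMod τ → Fin n} : condInv (bC c) (secV b c) := by
  constructor
  · intro p hp
    have hval : secV b c p = c (p.1 + 1) := if_pos hp
    show (p.1 + 1, secV b c p) ∈ bC c
    rw [hval]
    exact mem_bC.mpr rfl
  · intro a ha a' ha' hab
    have h1 : a.1 + 1 = a'.1 + 1 := (Prod.ext_iff.mp hab).1
    have h2 : a.1 = a'.1 := add_right_cancel h1
    have e1 : a = (a.1, c a.1) := Prod.ext rfl (mem_bC.mp (mem_coe.mp ha))
    have e2 : a' = (a'.1, c a'.1) := Prod.ext rfl (mem_bC.mp (mem_coe.mp ha'))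
    rw [e1, e2, h2]

lemma rep_unique {b c : ZMod τ → Fin n} {v} (hv : v ∈ RepU b (bC c))
    (hc : condInv (bC c) v) : v = secV b c := by
  funext p
  by_cases hp : p ∈ bC c
  · have h1 : stp v p ∈ bC c := hc.1 p hp
    have h2 : v p = c (p.1 + 1) := mem_bC.mp h1
    rw [h2, secV, if_pos hp]
  · simp only [RepU, mem_filter, mem_univ, true_and] at hv
    rw [hv p hp, secV, if_neg hp]

lemma w_secV {b c : ZMod τ → Fin n} : w (bC c) (secV b c) = -1 := by
  rw [w_of condInv_secV]
  have hsub : Subsingleton {x // x ∈ U0 (bC c)} :=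
    Fintype.card_le_one_iff_subsingleton.mp
      (by rw [Fintype.card_coe, U0_bC, Finset.card_singleton])
  have hrho : rho (condInv_secV (b := b) (c := c)) = 1 :=
    Equiv.ext fun z => Subsingleton.elim _ _
  rw [hrho, U0_bC, Finset.card_singleton]
  simp

lemma T_section {b c : ZMod τ → Fin n} : ∑ v ∈ RepU b (bC c), w (bC c) v = -1 := by
  rw [Finset.sum_eq_single (secV b c)]
  · exact w_secV
  · intro v hv hne
    by_contra hw
    have hc : condInv (bC c) v := by
      by_contra hcc; exact hw (w_of_not hcc)
    exact hne (rep_unique hv hc)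
  · intro h
    exact absurd secV_mem_RepU h

lemma T_empty {b : ZMod τ → Fin n} :
    ∑ v ∈ RepU b (∅ : Finset (ZMod τ × Fin n)), w ∅ v = 1 := by
  have hRep : RepU b (∅ : Finset (ZMod τ × Fin n)) = {fun _ => b 0} := by
    ext v
    simp only [RepU, mem_filter, mem_univ, true_and, Finset.mem_singleton]
    constructor
    · intro h
      funext p
      exact h p (Finset.notMem_empty p)
    · intro h p _
      rw [h]
  rw [hRep, Finset.sum_singleton, w_empty]

/-! ### decomposing the sum over `u` into fibers -/

lemma inner_sum {b : ZMod τ → Fin n} {U : Finset (ZMod τ × Fin n)}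
    (hU : ∀ p ∈ U, p.2 ≠ b p.1) :
    ∑ u ∈ (univ : Finset ((ZMod τ × Fin n) → Fin n)).filter (Gcond b), w U u
      = (n : ℤ) ^ (τ * n - τ - U.card) * (∑ v ∈ RepU b U, w U v) := by
  set r : ((ZMod τ × Fin n) → Fin n) → ((ZMod τ × Fin n) → Fin n) :=
    fun u p => if p ∈ U then u p else b 0 with hr
  have hmaps : ∀ u ∈ (univ : Finset ((ZMod τ × Fin n) → Fin n)).filter (Gcond b),
      r u ∈ RepU b U := by
    intro u _
    simp only [RepU, mem_filter, mem_univ, true_and]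
    intro p hp
    exact if_neg hp
  have hwr : ∀ u, w U u = w U (r u) :=
    fun u => w_ext (fun p hp => (if_pos hp).symm)
  rw [← Finset.sum_fiberwise_of_maps_to hmaps (fun u => w U u)]
  rw [Finset.mul_sum]
  apply Finset.sum_congr rfl
  intro v hv
  have hvrep : ∀ p, p ∉ U → v p = b 0 := by
    simpa only [RepU, mem_filter, mem_univ, true_and] using hv
  have hfibereq : ((univ : Finset ((ZMod τ × Fin n) → Fin n)).filter (Gcond b)).filter
      (fun u => r u = v)
      = ((univ : Finset ((ZMod τ × Fin n) → Fin n)).filter (Gcond b)).filter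
      (fun u => ∀ p ∈ U, u p = v p) := by
    apply Finset.filter_congr
    intro u _
    constructor
    · intro h p hp
      rw [← congrFun h p, hr]
      simp only [if_pos hp]
    · intro h
      funext p
      by_cases hp : p ∈ U
      · rw [hr]; simp only [if_pos hp]; exact h p hp
      · rw [hr]; simp only [if_neg hp]; exact (hvrep p hp).symm
  have hterm : ∀ u ∈ ((univ : Finset ((ZMod τ × Fin n) → Fin n)).filter (Gcond b)).filter
      (fun u => r u = v), w U u = w U v := by
    intro u hu
    rw [hwr u, (mem_filter.mp hu).2]
  rw [Finset.sum_congr rfl hterm, Finset.sum_const, hfibereq, fiber_card hU v,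
    nsmul_eq_mul]
  push_cast
  ring


/-! ### final count -/

lemma card_sections {b : ZMod τ → Fin n} :
    ((allU b).filter (fun U => ∃ c : ZMod τ → Fin n, (∀ i, c i ≠ b i) ∧ U = bC c)).card
      = (n - 1) ^ τ := by
  have h1 : ((univ : Finset (ZMod τ → Fin n)).filter (fun c => ∀ i, c i ≠ b i)).card
      = ((allU b).filter (fun U => ∃ c : ZMod τ → Fin n,
          (∀ i, c i ≠ b i) ∧ U = bC c)).card := by
    apply Finset.card_bij (fun c _ => bC c)
    · intro c hc
      simp only [mem_filter, mem_univ, true_and] at hc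
      rw [mem_filter]
      constructor
      · rw [mem_allU]
        intro p hp
        rw [mem_bC.mp hp]
        exact hc p.1
      · exact ⟨c, hc, rfl⟩
    · intro c₁ h₁ c₂ h₂ he
      funext i
      have hmem : (i, c₁ i) ∈ bC c₂ := by rw [← he]; exact mem_bC.mpr rfl
      exact mem_bC.mp hmem
    · intro U hU
      obtain ⟨-, c, hc, rfl⟩ := mem_filter.mp hU
      exact ⟨c, by simp only [mem_filter, mem_univ, true_and]; exact hc, rfl⟩
  rw [← h1, ← Fintype.card_subtype,
    Fintype.card_congr (Equiv.subtypePiEquivPi (p := fun (i : ZMod τ) (x : Fin n) => x ≠ b i)),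
    Fintype.card_pi]
  have h2 : ∀ i : ZMod τ, Fintype.card {x : Fin n // x ≠ b i} = n - 1 := by
    intro i
    rw [Fintype.card_subtype_compl (fun x : Fin n => x = b i)]
    rw [Fintype.card_subtype_eq, Fintype.card_fin]
  rw [Finset.prod_congr rfl (fun i _ => h2 i), Finset.prod_const, card_univ, ZMod.card]

lemma eval_U {b : ZMod τ → Fin n} : ∀ U ∈ allU b,
    (n : ℤ) ^ (τ * n - τ - U.card) * (∑ v ∈ RepU b U, w U v)
    = (if U = (∅ : Finset (ZMod τ × Fin n)) then (n : ℤ) ^ (τ*n - τ) else 0)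
      + (if ∃ c : ZMod τ → Fin n, (∀ i, c i ≠ b i) ∧ U = bC c then
          -((n : ℤ) ^ (τ*n - 2*τ)) else 0) := by
  intro U hU
  by_cases h0 : U = ∅
  · subst h0
    rw [T_empty, if_pos rfl, if_neg ?hc]
    · rw [Finset.card_empty, Nat.sub_zero, mul_one, add_zero]
    case hc =>
      rintro ⟨c, hc, he⟩
      exact absurd he.symm (Finset.nonempty_iff_ne_empty.mp bC_nonempty)
  · by_cases hsec : ∃ c : ZMod τ → Fin n, (∀ i, c i ≠ b i) ∧ U = bC c
    · obtain ⟨c, hcb, rfl⟩ := hsec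
      rw [T_section, if_neg h0, if_pos ⟨c, hcb, rfl⟩, card_bC,
        show τ*n - τ - τ = τ*n - 2*τ by omega]
      ring
    · rw [if_neg h0, if_neg hsec]
      by_cases hex : ∃ v, v ∈ RepU b U ∧ condInv U v
      · obtain ⟨v0, hv0, hc0⟩ := hex
        have hs1 : (U0 U).Nonempty :=
          U0_nonempty_of_ne hc0 (Finset.nonempty_iff_ne_empty.mpr h0)
        have hpos : 0 < (U0 U).card := Finset.card_pos.mpr hs1
        have hs2 : 1 < (U0 U).card := by
          rcases Nat.lt_or_ge 1 (U0 U).card with h | h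
          · exact h
          · exfalso
            have hcard1 : (U0 U).card = 1 := by omega
            obtain ⟨c, hcU⟩ := section_of_card_one hc0 hcard1
            apply hsec
            refine ⟨c, ?_, hcU⟩
            intro i
            have hmem : (i, c i) ∈ U := by
              rw [hcU]; exact mem_image_of_mem _ (mem_univ i)
            exact mem_allU.mp hU _ hmem
        obtain ⟨x, hx, y, hy, hxy⟩ := Finset.one_lt_card.mp hs2
        rw [T_zero hx hy hxy, mul_zero, add_zero]
      · push_neg at hex
        rw [show (∑ v ∈ RepU b U, w U v) = 0 from
          Finset.sum_eq_zero (fun v hv => w_of_not (hex v hv)), mul_zero, add_zero]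

lemma main_count (b : ZMod τ → Fin n) (hn : 1 ≤ n) :
    ((((univ : Finset ((ZMod τ × Fin n) → Fin n)).filter
      (fun u => Gcond b u ∧ good b u)).card : ℤ))
      = (n : ℤ) ^ (τ*n - τ) - ((n : ℤ) - 1) ^ τ * (n : ℤ) ^ (τ*n - 2*τ) := by
  have h1 : (univ : Finset ((ZMod τ × Fin n) → Fin n)).filter
        (fun u => Gcond b u ∧ good b u)
      = ((univ : Finset ((ZMod τ × Fin n) → Fin n)).filter (Gcond b)).filter
        (fun u => good b u) := by
    rw [Finset.filter_filter]
  have h2 : (∑ u ∈ (univ : Finset ((ZMod τ × Fin n) → Fin n)).filter (Gcond b),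
      (if good b u then (1 : ℤ) else 0))
      = ((((univ : Finset ((ZMod τ × Fin n) → Fin n)).filter (Gcond b)).filter
        (fun u => good b u)).card : ℤ) := by rw [Finset.sum_boole]
  rw [h1, ← h2]
  have h3 : ∀ u ∈ (univ : Finset ((ZMod τ × Fin n) → Fin n)).filter (Gcond b),
      (if good b u then (1 : ℤ) else 0) = ∑ U ∈ allU b, w U u := by
    intro u hu
    exact (lemA (by simpa using (mem_filter.mp hu).2)).symm
  rw [Finset.sum_congr rfl h3, Finset.sum_comm,
    Finset.sum_congr rfl (fun U hU => inner_sum (mem_allU.mp hU)),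
    Finset.sum_congr rfl eval_U, Finset.sum_add_distrib]
  have h5 : (∑ U ∈ allU b, (if U = (∅ : Finset (ZMod τ × Fin n)) then
      (n : ℤ) ^ (τ*n - τ) else 0)) = (n : ℤ) ^ (τ*n - τ) := by
    rw [Finset.sum_ite_eq' (allU b) (∅ : Finset (ZMod τ × Fin n))
      (fun _ => (n : ℤ) ^ (τ*n - τ))]
    rw [if_pos (mem_allU.mpr (fun p hp => absurd hp (Finset.notMem_empty p)))]
  have h6 : (∑ U ∈ allU b, (if ∃ c : ZMod τ → Fin n, (∀ i, c i ≠ b i) ∧ U = bC c then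
      -((n : ℤ) ^ (τ*n - 2*τ)) else 0)) = ((n-1)^τ : ℕ) * -((n : ℤ) ^ (τ*n - 2*τ)) := by
    rw [← Finset.sum_filter, Finset.sum_const, card_sections, nsmul_eq_mul]
  rw [h5, h6]
  have hc1 : (((n-1)^τ : ℕ) : ℤ) = ((n : ℤ) - 1)^τ := by
    rw [Nat.cast_pow, Nat.cast_sub hn, Nat.cast_one]
  rw [hc1]
  ring


lemma main_count_nat (b : ZMod τ → Fin n) (hn : 2 ≤ n) :
    ((univ : Finset ((ZMod τ × Fin n) → Fin n)).filter
      (fun u => Gcond b u ∧ good b u)).card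
      = n ^ (τ * (n - 2)) * (n ^ τ - (n - 1) ^ τ) := by
  obtain ⟨k, rfl⟩ : ∃ k, n = k + 2 := ⟨n - 2, by omega⟩
  have main := main_count b (by omega)
  have hinj := @Nat.cast_injective ℤ _ _
  apply hinj
  rw [main]
  rw [show τ*(k+2) - τ = τ*k + τ by
      rw [show τ*(k+2) = τ*k+τ+τ by ring]; simp,
    show τ*(k+2) - 2*τ = τ*k by
      rw [show τ*(k+2) = τ*k+2*τ by ring]; simp,
    show k+2-2 = k by omega, show k+2-1 = k+1 by omega]
  have hle2 : (k+1)^τ ≤ (k+2)^τ := Nat.pow_le_pow_left (by omega) τ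
  push_cast [Nat.cast_sub hle2]
  ring

end DDC

/-- the number of τ-tuples `(g_0, …, g_{τ−1})` of maps
`ℤ_n → ℤ_n` with `g_i(b_i) = b_{i+1}` and such that every node of the associated
τ-partite functional digraph has a directed path to `(0, b_0)` equals
`n^{τ(n−2)}·(n^τ − (n−1)^τ)`. -/
theorem deciding_digraph_count (τ n : ℕ) (hτ : 1 ≤ τ) (hn : 2 ≤ n)
    (b : ZMod τ → Fin n) :
    Nat.card {g : ZMod τ → Fin n → Fin n //
        (∀ i : ZMod τ, g i (b i) = b (i + 1)) ∧
        ∀ p : ZMod τ × Fin n, ∃ m : ℕ,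
          (fun q : ZMod τ × Fin n => (q.1 + 1, g q.1 q.2))^[m] p = (0, b 0)}
      = n ^ (τ * (n - 2)) * (n ^ τ - (n - 1) ^ τ) := by
  haveI : NeZero τ := ⟨by omega⟩
  classical
  have heq : Nat.card {g : ZMod τ → Fin n → Fin n //
        (∀ i : ZMod τ, g i (b i) = b (i + 1)) ∧
        ∀ p : ZMod τ × Fin n, ∃ m : ℕ,
          (fun q : ZMod τ × Fin n => (q.1 + 1, g q.1 q.2))^[m] p = (0, b 0)}
      = Nat.card {u : ZMod τ × Fin n → Fin n // DDC.Gcond b u ∧ DDC.good b u} :=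
    Nat.card_congr (Equiv.subtypeEquiv ((Equiv.curry (ZMod τ) (Fin n) (Fin n)).symm)
      (fun g => Iff.rfl))
  rw [heq, Nat.card_eq_fintype_card, Fintype.card_subtype]
  exact DDC.main_count_nat b hn
end
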